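/- arXiv:2303.06300 — 5 statements merged into one kernel-verified Lean document; each statement's English description precedes it below -/
import Mathlib

section
/- The total number of blocks over all non-crossing partitions of [r] equals binom(2r−1, r) for r ≥ 1. -/
/-- `l` is a restricted growth sequence (canonical sequential form of a set
partition): it starts with 1, all letters are ≥ 1, and each letter is at most
one more than the maximum of the preceding prefix. -/
def IsRGS (l : List ℕ) : Prop :=
  l.getD 0 1 = 1 ∧ (∀ x ∈ l, 1 ≤ x) ∧
  ∀ i, i + 1 < l.length → l.getD (i + 1) 0 ≤ (l.take (i + 1)).foldr max 0 + 1

/-- `l` contains a (classical) occurrence of 1-2-1-2: a subsequence a,b,a,b with a < b. -/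
def Crossing (l : List ℕ) : Prop :=
  ∃ i j k m : ℕ, i < j ∧ j < k ∧ k < m ∧ m < l.length ∧
    l.getD i 0 = l.getD k 0 ∧ l.getD j 0 = l.getD m 0 ∧ l.getD i 0 < l.getD j 0

/-- `l` is the canonical sequential form of a non-crossing partition of [n]. -/
def NCseq (n : ℕ) (l : List ℕ) : Prop := l.length = n ∧ IsRGS l ∧ ¬ Crossing l

/-- Two lists of the same length are order-isomorphic. -/
def OrdIso (s t : List ℕ) : Prop :=
  s.length = t.length ∧ ∀ j k, j < s.length → k < s.length →
    (s.getD j 0 < s.getD k 0 ↔ t.getD j 0 < t.getD k 0)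

/-- The subword pattern `τ` occurs in `l` starting at position `i`. -/
def occAt (τ l : List ℕ) (i : ℕ) : Prop := OrdIso τ ((l.drop i).take τ.length)

/-- The number of occurrences of the subword pattern `τ` in `l`. -/
noncomputable def occCount (τ l : List ℕ) : ℕ := Nat.card {i : ℕ // occAt τ l i}

/-- The total number of occurrences of the subword pattern `τ` over all
members of NC_n, counted with multiplicity (as marked occurrences). -/
noncomputable def totalOcc (n : ℕ) (τ : List ℕ) : ℕ :=
  Nat.card {p : List ℕ × ℕ // NCseq n p.1 ∧ occAt τ p.1 p.2}

/-! Non-crossing restricted growth sequences are grown one letter at a time. The letters that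
may be appended to `l` are `maxLetter l + 1` and the letters of the still open blocks; appending
the `k`-th smallest of them leaves `k` old ones plus a new top. Hence the statistic
`deficit l = |l| + 1 - #(extensions l)` evolves like the Catalan triangle: among the sequences of
length `m + 1`, those of deficit `j` number `C(m+j, m) - C(m+j, m+1)` and have
`(m + 1 - j) C(m+j-1, m-1)` blocks in total, and summing over `j` telescopes to `C(2m+1, m+1)`. -/

open Finset

def maxLetter (l : List ℕ) : ℕ := l.foldr max 0

@[simp]
lemma maxLetter_nil : maxLetter [] = 0 := rfl

lemma maxLetter_append_singleton (l : List ℕ) (x : ℕ) :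
    maxLetter (l ++ [x]) = max (maxLetter l) x := by
  induction l with
  | nil => simp [maxLetter]
  | cons a t ih =>
    simp only [maxLetter, List.cons_append, List.foldr_cons] at ih ⊢
    rw [ih, max_assoc]

lemma le_maxLetter_of_mem {l : List ℕ} {y : ℕ} (h : y ∈ l) : y ≤ maxLetter l :=
  List.le_max_of_le h le_rfl

namespace List

variable {α : Type*} {l : List α} {d : α}

lemma getD_mem {i : ℕ} (h : i < l.length) : l.getD i d ∈ l := by
  rw [getD_eq_getElem _ _ h]
  exact getElem_mem h

lemma getD_append_singleton_length (l : List α) (x d : α) : (l ++ [x]).getD l.length d = x := by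
  simp

lemma getD_take {i t : ℕ} (h : i < t) : (l.take t).getD i d = l.getD i d := by
  simp [getD_eq_getElem?_getD, h]

end List

lemma maxLetter_take_succ {l : List ℕ} {t : ℕ} (h : t < l.length) :
    maxLetter (l.take (t + 1)) = max (maxLetter (l.take t)) (l.getD t 0) := by
  rw [List.take_add_one, List.getElem?_eq_getElem h, List.getD_eq_getElem _ _ h]
  exact maxLetter_append_singleton _ _

lemma isRGS_iff {l : List ℕ} :
    IsRGS l ↔ ∀ t < l.length, 1 ≤ l.getD t 0 ∧ l.getD t 0 ≤ maxLetter (l.take t) + 1 := by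
  refine ⟨fun ⟨hhead, hpos, hstep⟩ t ht => ⟨hpos _ (List.getD_mem ht), ?_⟩,
    fun h => ⟨?_, ?_, ?_⟩⟩
  · cases t with
    | zero => cases l with
      | nil => simp at ht
      | cons a _ => simp_all
    | succ i => exact hstep i ht
  · cases l with
    | nil => rfl
    | cons a _ =>
      have := h 0 (by simp)
      simp only [List.getD_cons_zero, List.take_zero, maxLetter_nil] at this ⊢
      omega
  · intro x hx
    obtain ⟨i, hi, rfl⟩ := List.getElem_of_mem hx
    simpa only [List.getD_eq_getElem _ _ hi] using (h i hi).1
  · exact fun i hi => (h (i + 1) hi).2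

namespace IsRGS

variable {l : List ℕ}

lemma maxLetter_take_le (hR : IsRGS l) (t : ℕ) : maxLetter (l.take t) ≤ t := by
  induction t with
  | zero => simp
  | succ t ih =>
    rcases le_or_gt l.length t with hle | hlt
    · rw [List.take_of_length_le (by omega)]
      rw [List.take_of_length_le hle] at ih
      omega
    · rw [maxLetter_take_succ hlt]
      have := (isRGS_iff.mp hR t hlt).2
      omega

lemma maxLetter_le_length (hR : IsRGS l) : maxLetter l ≤ l.length := by
  simpa using hR.maxLetter_take_le l.length

lemma exists_getD_eq (hR : IsRGS l) {t v : ℕ} (ht : t ≤ l.length) (hv : 1 ≤ v)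
    (hvt : v ≤ maxLetter (l.take t)) :
    ∃ i < t, l.getD i 0 = v := by
  induction t with
  | zero => simp at hvt; omega
  | succ t ih =>
    have hlt : t < l.length := by omega
    rw [maxLetter_take_succ hlt] at hvt
    rcases le_or_gt v (maxLetter (l.take t)) with hle | hgt
    · obtain ⟨i, hi, he⟩ := ih (by omega) hle
      exact ⟨i, by omega, he⟩
    · have := (isRGS_iff.mp hR t hlt).2
      exact ⟨t, by omega, by omega⟩

lemma mem_of_le_maxLetter (hR : IsRGS l) {v : ℕ} (hv : 1 ≤ v) (hvl : v ≤ maxLetter l) :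
    v ∈ l := by
  obtain ⟨i, hi, rfl⟩ := hR.exists_getD_eq le_rfl hv (by simpa using hvl)
  exact List.getD_mem hi

end IsRGS

lemma isRGS_append_singleton_iff {l : List ℕ} {x : ℕ} :
    IsRGS (l ++ [x]) ↔ IsRGS l ∧ 1 ≤ x ∧ x ≤ maxLetter l + 1 := by
  rw [isRGS_iff, isRGS_iff, List.length_append, List.length_singleton, Nat.forall_lt_succ_right,
    List.getD_append_singleton_length, List.take_left' rfl]
  refine and_congr_left' (forall₂_congr fun t ht => ?_)
  rw [List.getD_append _ _ _ _ ht, List.take_append_of_le_length ht.le]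

def NoSmallerAfter (l : List ℕ) (x : ℕ) : Prop :=
  ∀ k < l.length, ∀ j < k, l.getD j 0 = x → x ≤ l.getD k 0

instance (l : List ℕ) : DecidablePred (NoSmallerAfter l) :=
  fun _ => by unfold NoSmallerAfter; infer_instance

lemma noSmallerAfter_append_singleton_iff {l : List ℕ} {x y : ℕ} :
    NoSmallerAfter (l ++ [x]) y ↔ NoSmallerAfter l y ∧ (y ∈ l → y ≤ x) := by
  unfold NoSmallerAfter
  rw [List.length_append, List.length_singleton, Nat.forall_lt_succ_right,
    List.getD_append_singleton_length]
  refine and_congr (forall₂_congr fun k hk => ?_) ⟨fun h hy => ?_, fun h j hj he => h ?_⟩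
  · refine forall₂_congr fun j hj => ?_
    rw [List.getD_append _ _ _ _ hk, List.getD_append _ _ _ _ (hj.trans hk)]
  · obtain ⟨j, hj, rfl⟩ := List.getElem_of_mem hy
    exact h j hj (by rw [List.getD_append _ _ _ _ hj, List.getD_eq_getElem _ _ hj])
  · rw [← he, List.getD_append _ _ _ _ hj]
    exact List.getD_mem hj

-- In a restricted growth sequence the first letter `a` of a crossing `a b a b` may be taken to be
-- the first occurrence of `a`, which precedes the first `b`; so only `b ... a ... b` matters.
lemma IsRGS.crossing_iff {l : List ℕ} (hR : IsRGS l) :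
    Crossing l ↔ ∃ m < l.length, ¬ NoSmallerAfter (l.take m) (l.getD m 0) := by
  simp only [NoSmallerAfter, List.length_take, not_forall, not_le, exists_prop]
  constructor
  · rintro ⟨i, j, k, m, hij, hjk, hkm, hm, hik, hjm, hij'⟩
    refine ⟨m, hm, k, by omega, j, hjk, ?_, ?_⟩
    · rw [List.getD_take (by omega), hjm]
    · rw [List.getD_take hkm, ← hik, ← hjm]
      exact hij'
  · rintro ⟨m, hm, k, hk, j, hjk, he, hlt⟩
    rw [List.getD_take (by omega)] at he hlt
    have hk1 : 1 ≤ l.getD k 0 := (isRGS_iff.mp hR k (by omega)).1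
    have hj := (isRGS_iff.mp hR j (by omega)).2
    obtain ⟨i, hi, hie⟩ := hR.exists_getD_eq (t := j) (by omega) hk1 (by omega)
    exact ⟨i, j, k, m, hi, hjk, by omega, hm, hie, he, by omega⟩

lemma not_crossing_append_singleton_iff {l : List ℕ} {x : ℕ} (hR : IsRGS (l ++ [x])) :
    ¬ Crossing (l ++ [x]) ↔ ¬ Crossing l ∧ NoSmallerAfter l x := by
  rw [hR.crossing_iff, (isRGS_append_singleton_iff.mp hR).1.crossing_iff, List.length_append,
    List.length_singleton, Nat.exists_lt_succ_right, List.getD_append_singleton_length,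
    List.take_left' rfl, not_or, not_not]
  refine and_congr_left' (not_congr (exists_congr fun m => and_congr_right fun hm => ?_))
  rw [List.getD_append _ _ _ _ hm, List.take_append_of_le_length hm.le]

def extensions (l : List ℕ) : Finset ℕ := {x ∈ Icc 1 (maxLetter l + 1) | NoSmallerAfter l x}

lemma mem_extensions {l : List ℕ} {x : ℕ} :
    x ∈ extensions l ↔ (1 ≤ x ∧ x ≤ maxLetter l + 1) ∧ NoSmallerAfter l x := by
  rw [extensions, mem_filter, mem_Icc]

lemma ncseq_append_singleton_iff {n : ℕ} {l : List ℕ} {x : ℕ} :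
    NCseq (n + 1) (l ++ [x]) ↔ NCseq n l ∧ x ∈ extensions l := by
  constructor
  · rintro ⟨hlen, hR, hNC⟩
    obtain ⟨hRl, hx⟩ := isRGS_append_singleton_iff.mp hR
    obtain ⟨hNCl, hsmall⟩ := (not_crossing_append_singleton_iff hR).mp hNC
    exact ⟨⟨by simpa using hlen, hRl, hNCl⟩, mem_extensions.mpr ⟨hx, hsmall⟩⟩
  · rintro ⟨⟨hlen, hRl, hNCl⟩, hx⟩
    rw [mem_extensions] at hx
    have hR := isRGS_append_singleton_iff.mpr ⟨hRl, hx.1⟩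
    exact ⟨by simp [hlen], hR, (not_crossing_append_singleton_iff hR).mpr ⟨hNCl, hx.2⟩⟩

def ncFinset : ℕ → Finset (List ℕ)
  | 0 => {[]}
  | n + 1 => (ncFinset n).biUnion fun l => (extensions l).image fun x => l ++ [x]

lemma mem_ncFinset {n : ℕ} {l : List ℕ} : l ∈ ncFinset n ↔ NCseq n l := by
  induction n generalizing l with
  | zero =>
    rw [ncFinset, mem_singleton]
    refine ⟨fun h => ?_, fun h => List.eq_nil_of_length_eq_zero h.1⟩
    subst h
    exact ⟨rfl, isRGS_iff.mpr (by simp), fun ⟨_, _, _, _, _, _, _, hm, _⟩ => by simp at hm⟩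
  | succ n ih =>
    simp only [ncFinset, mem_biUnion, mem_image, ih]
    constructor
    · rintro ⟨a, ha, x, hx, rfl⟩
      exact ncseq_append_singleton_iff.mpr ⟨ha, hx⟩
    · intro h
      obtain ⟨a, x, rfl⟩ := (List.eq_nil_or_concat' l).resolve_left (by
        rintro rfl
        simpa using h.1)
      obtain ⟨ha, hx⟩ := ncseq_append_singleton_iff.mp h
      exact ⟨a, ha, x, hx, rfl⟩

lemma sum_ncFinset_succ {M : Type*} [AddCommMonoid M] (n : ℕ) (f : List ℕ → M) :
    ∑ l ∈ ncFinset (n + 1), f l =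
      ∑ l ∈ ncFinset n, ∑ x ∈ extensions l, f (l ++ [x]) := by
  rw [ncFinset, sum_biUnion]
  · refine sum_congr rfl fun l _ => sum_image fun x _ y _ h => ?_
    simpa using (List.append_inj' h rfl).2
  · intro a _ b _ hab
    simp only [Function.onFun, disjoint_left, mem_image]
    rintro _ ⟨x, _, rfl⟩ ⟨y, _, h⟩
    exact hab (List.append_inj' h rfl).1.symm

lemma noSmallerAfter_of_notMem {l : List ℕ} {y : ℕ} (h : y ∉ l) : NoSmallerAfter l y :=
  fun _ hk _ hjk he => absurd (he ▸ List.getD_mem (hjk.trans hk)) h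

lemma maxLetter_add_one_mem_extensions (l : List ℕ) : maxLetter l + 1 ∈ extensions l :=
  mem_extensions.mpr ⟨⟨by omega, le_rfl⟩,
    noSmallerAfter_of_notMem fun h => by have := le_maxLetter_of_mem h; omega⟩

lemma IsRGS.one_mem_extensions {l : List ℕ} (hR : IsRGS l) : 1 ∈ extensions l :=
  mem_extensions.mpr ⟨⟨le_rfl, by omega⟩, fun k hk _ _ _ => (isRGS_iff.mp hR k hk).1⟩

lemma IsRGS.two_le_card_extensions {l : List ℕ} (hR : IsRGS l) (hl : l ≠ []) :
    2 ≤ #(extensions l) := by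
  obtain ⟨y, hy⟩ := List.exists_mem_of_ne_nil l hl
  have h1 : 1 ≤ y := hR.2.1 y hy
  have := le_maxLetter_of_mem hy
  exact one_lt_card.mpr ⟨1, hR.one_mem_extensions, _, maxLetter_add_one_mem_extensions l,
    by omega⟩

lemma card_extensions_le (l : List ℕ) : #(extensions l) ≤ maxLetter l + 1 :=
  (card_filter_le _ _).trans (by simp)

lemma IsRGS.extensions_append_singleton {l : List ℕ} (hR : IsRGS l) {x : ℕ}
    (hx : x ≤ maxLetter l + 1) :
    extensions (l ++ [x]) = insert (maxLetter (l ++ [x]) + 1) {y ∈ extensions l | y ≤ x} := by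
  ext y
  simp only [mem_insert, mem_filter, mem_extensions, noSmallerAfter_append_singleton_iff,
    maxLetter_append_singleton]
  constructor
  · rintro ⟨⟨hy1, hy⟩, hsmall, hyx⟩
    refine or_iff_not_imp_left.mpr fun hne => ?_
    have hle : y ≤ x := by
      by_contra! hxy
      exact absurd (hyx (hR.mem_of_le_maxLetter hy1 (by omega))) (by omega)
    exact ⟨⟨⟨hy1, by omega⟩, hsmall⟩, hle⟩
  · rintro (rfl | ⟨⟨⟨hy1, _⟩, hsmall⟩, hyx⟩)
    · have hnot : max (maxLetter l) x + 1 ∉ l := fun h => by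
        have := le_maxLetter_of_mem h; omega
      exact ⟨⟨by omega, le_rfl⟩, noSmallerAfter_of_notMem hnot, fun h => absurd h hnot⟩
    · exact ⟨⟨hy1, by omega⟩, hsmall, fun _ => hyx⟩

lemma IsRGS.card_extensions_append_singleton {l : List ℕ} (hR : IsRGS l) {x : ℕ}
    (hx : x ≤ maxLetter l + 1) :
    #(extensions (l ++ [x])) = #{y ∈ extensions l | y ≤ x} + 1 := by
  rw [hR.extensions_append_singleton hx, card_insert_of_notMem]
  rw [mem_filter, maxLetter_append_singleton]
  omega

lemma Finset.sum_comp_card_filter_le {α M : Type*} [LinearOrder α] [AddCommMonoid M]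
    (s : Finset α) (f : ℕ → M) :
    ∑ x ∈ s, f #{y ∈ s | y ≤ x} = ∑ i ∈ range #s, f (i + 1) := by
  classical
  induction s using Finset.induction_on_max with
  | empty => simp
  | insert a s ha ih =>
    have has : a ∉ s := fun h => lt_irrefl a (ha a h)
    rw [sum_insert has, card_insert_of_notMem has, sum_range_succ, add_comm, ← ih]
    congr 1
    · refine sum_congr rfl fun x hx => ?_
      rw [filter_insert, if_neg (not_le.mpr (ha x hx))]
    · rw [filter_true_of_mem fun y hy => ?_, card_insert_of_notMem has]
      rcases mem_insert.mp hy with rfl | hy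
      exacts [le_rfl, (ha y hy).le]

lemma IsRGS.sum_extensions_append_singleton {M : Type*} [AddCommMonoid M] {l : List ℕ}
    (hR : IsRGS l) (F : ℕ → ℕ → M) :
    ∑ x ∈ extensions l, F #(extensions (l ++ [x])) (maxLetter (l ++ [x])) =
      F (#(extensions l) + 1) (maxLetter l + 1) +
        ∑ i ∈ range (#(extensions l) - 1), F (i + 2) (maxLetter l) := by
  have htop := maxLetter_add_one_mem_extensions l
  have hle : ∀ y ∈ extensions l, y ≤ maxLetter l + 1 := fun y hy => (mem_extensions.mp hy).1.2
  rw [← add_sum_erase _ _ htop]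
  congr 1
  · rw [hR.card_extensions_append_singleton le_rfl, filter_true_of_mem hle,
      maxLetter_append_singleton, max_eq_right (by omega)]
  · have hrank : ∀ x ∈ (extensions l).erase (maxLetter l + 1),
        F #(extensions (l ++ [x])) (maxLetter (l ++ [x])) =
          F (#{y ∈ (extensions l).erase (maxLetter l + 1) | y ≤ x} + 1) (maxLetter l) := by
      intro x hx
      have hxM : x ≤ maxLetter l := by
        have := hle x (mem_of_mem_erase hx)
        have := ne_of_mem_erase hx
        omega
      rw [hR.card_extensions_append_singleton (by omega), filter_erase,
        erase_eq_of_notMem (by rw [mem_filter]; omega), maxLetter_append_singleton, max_eq_left hxM]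
    rw [sum_congr rfl hrank, sum_comp_card_filter_le (f := fun k => F (k + 1) (maxLetter l)),
      card_erase_of_mem htop]

def deficit (l : List ℕ) : ℕ := l.length + 1 - #(extensions l)

lemma NCseq.deficit_add_card_extensions {r : ℕ} {l : List ℕ} (hl : NCseq r l) :
    deficit l + #(extensions l) = r + 1 := by
  have := card_extensions_le l
  have := hl.2.1.maxLetter_le_length
  have := hl.1
  unfold deficit
  omega

lemma NCseq.sum_extensions_deficit {r j : ℕ} {l : List ℕ} (hl : NCseq r l) (hj : j ≤ r)
    (W : ℕ → ℤ) :
    ∑ x ∈ extensions l, (if deficit (l ++ [x]) = j then W (maxLetter (l ++ [x])) else 0) =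
      (if deficit l = j then W (maxLetter l + 1) else 0) +
        if deficit l < j then W (maxLetter l) else 0 := by
  have hd := hl.deficit_add_card_extensions
  have hdx : ∀ x, deficit (l ++ [x]) = r + 2 - #(extensions (l ++ [x])) := by
    simp [deficit, hl.1]
  simp_rw [hdx]
  rw [hl.2.1.sum_extensions_append_singleton (fun h m => if r + 2 - h = j then W m else 0)]
  congr 1
  · split_ifs <;> first | rfl | omega
  · have hcond : ∀ i ∈ range (#(extensions l) - 1),
        (if r + 2 - (i + 2) = j then W (maxLetter l) else 0) =
          if r - j = i then W (maxLetter l) else 0 := fun i hi => by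
      rw [mem_range] at hi
      split_ifs <;> first | rfl | omega
    rw [sum_congr rfl hcond, sum_ite_eq]
    simp only [mem_range]
    split_ifs <;> first | rfl | omega

def fiberSum (W : ℕ → ℤ) (r j : ℕ) : ℤ :=
  ∑ l ∈ ncFinset r with deficit l = j, W (maxLetter l)

lemma fiberSum_succ (W : ℕ → ℤ) {r j : ℕ} (hj : j ≤ r) :
    fiberSum W (r + 1) j =
      fiberSum (fun m => W (m + 1)) r j + ∑ i ∈ range j, fiberSum W r i := by
  have hlt : ∀ l, (if deficit l < j then W (maxLetter l) else 0) =
      ∑ i ∈ range j, if deficit l = i then W (maxLetter l) else 0 := by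
    intro l
    simp only [sum_ite_eq, mem_range]
  simp only [fiberSum, sum_filter]
  rw [sum_ncFinset_succ, sum_congr rfl fun l hl => (mem_ncFinset.mp hl).sum_extensions_deficit hj W,
    sum_add_distrib, sum_congr rfl fun l _ => hlt l, sum_comm]

lemma fiberSum_add_one_self (W : ℕ → ℤ) (r : ℕ) : fiberSum W (r + 1) (r + 1) = 0 := by
  refine sum_eq_zero fun l hl => ?_
  obtain ⟨hmem, hdl⟩ := mem_filter.mp hl
  have hl := mem_ncFinset.mp hmem
  have := hl.deficit_add_card_extensions
  have := hl.2.1.two_le_card_extensions (by rintro rfl; simp [NCseq] at hl)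
  omega

lemma fiberSum_zero_zero (W : ℕ → ℤ) : fiberSum W 0 0 = W 0 := by
  have h : deficit [] = 0 := by decide
  rw [fiberSum, ncFinset, filter_singleton, if_pos h, sum_singleton, maxLetter_nil]

def ballot (m j : ℕ) : ℤ := (m + j).choose m - (m + j).choose (m + 1)

-- For `m = 0` the truncated subtractions give `1 - j`, the right value for `j ≤ 1`.
def blockWeight (m j : ℕ) : ℤ := ((m : ℤ) + 1 - j) * (m + j - 1).choose (m - 1)

lemma ballot_add_one_self (m : ℕ) : ballot m (m + 1) = 0 := by
  rw [ballot, show m + (m + 1) = 2 * m + 1 by ring, Nat.choose_symm_half, sub_self]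

lemma blockWeight_add_one_self (m : ℕ) : blockWeight m (m + 1) = 0 := by
  simp [blockWeight]

lemma sum_range_ballot (m j : ℕ) : ∑ i ∈ range (j + 1), ballot m i = ballot (m + 1) j := by
  induction j with
  | zero => simp [ballot]
  | succ j ih =>
    rw [sum_range_succ, ih, ballot, ballot, ballot, show m + 1 + j = m + j + 1 by ring,
      show m + (j + 1) = m + j + 1 by ring, show m + 1 + (j + 1) = m + j + 1 + 1 by ring,
      Nat.choose_succ_succ (m + j + 1) m, Nat.choose_succ_succ (m + j + 1) (m + 1)]
    push_cast
    ring

lemma sum_range_blockWeight {m j : ℕ} (hj : j ≤ m + 1) :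
    ∑ i ∈ range (j + 1), blockWeight m i = blockWeight (m + 1) j - ballot m j := by
  induction j with
  | zero => simp [blockWeight, ballot]
  | succ j ih =>
    rw [sum_range_succ, ih (by omega)]
    rcases m with _ | k
    · obtain rfl : j = 0 := by omega
      simp [blockWeight, ballot]
    · simp only [blockWeight, ballot]
      rw [show k + 1 + (j + 1) - 1 = k + j + 1 by omega,
        show k + 1 + 1 + j - 1 = k + j + 1 by omega,
        show k + 1 + 1 + (j + 1) - 1 = k + j + 1 + 1 by omega,
        show k + 1 + j = k + j + 1 by ring, show k + 1 + (j + 1) = k + j + 1 + 1 by ring,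
        show k + 1 - 1 = k by omega, show k + 1 + 1 - 1 = k + 1 by omega,
        Nat.choose_succ_succ (k + j + 1) k, Nat.choose_succ_succ (k + j + 1) (k + 1)]
      push_cast
      ring

lemma blockWeight_add_one_self_sub_ballot (m : ℕ) :
    blockWeight (m + 1) (m + 1) - ballot m (m + 1) = (2 * m + 1).choose (m + 1) := by
  rw [ballot_add_one_self, blockWeight, show m + 1 + (m + 1) - 1 = 2 * m + 1 by omega,
    Nat.add_sub_cancel, Nat.choose_symm_half]
  push_cast
  ring

lemma fiberSum_add (W V : ℕ → ℤ) (r j : ℕ) :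
    fiberSum (W + V) r j = fiberSum W r j + fiberSum V r j :=
  sum_add_distrib

lemma fiberSum_one_succ {r j : ℕ} (hj : j ≤ r) :
    fiberSum 1 (r + 1) j = ∑ i ∈ range (j + 1), fiberSum 1 r i := by
  rw [fiberSum_succ 1 hj, sum_range_succ, add_comm]
  rfl

lemma fiberSum_natCast_succ {r j : ℕ} (hj : j ≤ r) :
    fiberSum Nat.cast (r + 1) j =
      ∑ i ∈ range (j + 1), fiberSum Nat.cast r i + fiberSum 1 r j := by
  have hshift : (fun m : ℕ => ((m + 1 : ℕ) : ℤ)) = Nat.cast + 1 := by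
    ext
    simp
  rw [fiberSum_succ _ hj, hshift, fiberSum_add, sum_range_succ]
  ring

lemma fiberSum_one_eq_ballot (m : ℕ) : ∀ j ≤ m + 1, fiberSum 1 (m + 1) j = ballot m j := by
  induction m with
  | zero =>
    intro j hj
    interval_cases j
    · rw [fiberSum_one_succ le_rfl, sum_range_one, fiberSum_zero_zero]
      rfl
    · rw [fiberSum_add_one_self, ballot_add_one_self]
  | succ m ih =>
    intro j hj
    rcases hj.lt_or_eq with hj | rfl
    · rw [fiberSum_one_succ (by omega), ← sum_range_ballot]
      exact sum_congr rfl fun i hi => ih i (by rw [mem_range] at hi; omega)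
    · rw [fiberSum_add_one_self, ballot_add_one_self]

lemma fiberSum_natCast_eq_blockWeight (m : ℕ) :
    ∀ j ≤ m + 1, fiberSum Nat.cast (m + 1) j = blockWeight m j := by
  induction m with
  | zero =>
    intro j hj
    interval_cases j
    · rw [fiberSum_natCast_succ le_rfl, sum_range_one, fiberSum_zero_zero, fiberSum_zero_zero]
      rfl
    · rw [fiberSum_add_one_self, blockWeight_add_one_self]
  | succ m ih =>
    intro j hj
    rcases hj.lt_or_eq with hj | rfl
    · rw [fiberSum_natCast_succ (by omega), fiberSum_one_eq_ballot m j (by omega),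
        sum_congr rfl fun i hi => ih i (by rw [mem_range] at hi; omega),
        sum_range_blockWeight (by omega)]
      ring
    · rw [fiberSum_add_one_self, blockWeight_add_one_self]

lemma sum_ncFinset_eq_sum_fiberSum (W : ℕ → ℤ) (r : ℕ) :
    ∑ l ∈ ncFinset r, W (maxLetter l) = ∑ j ∈ range (r + 1), fiberSum W r j := by
  refine (sum_fiberwise_of_maps_to (fun l hl => mem_range.mpr ?_) _).symm
  have := (mem_ncFinset.mp hl).deficit_add_card_extensions
  have := card_pos.mpr ⟨_, maxLetter_add_one_mem_extensions l⟩
  omega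

lemma sum_maxLetter_ncFinset (m : ℕ) :
    ∑ l ∈ ncFinset (m + 1), (maxLetter l : ℤ) = (2 * m + 1).choose (m + 1) := by
  rw [sum_ncFinset_eq_sum_fiberSum Nat.cast, sum_congr rfl fun j hj =>
      fiberSum_natCast_eq_blockWeight m j (by rw [mem_range] at hj; omega),
    sum_range_blockWeight le_rfl, blockWeight_add_one_self_sub_ballot]

lemma natCard_markedBlocks_eq_sum_maxLetter (r : ℕ) :
    Nat.card {p : List ℕ × ℕ // NCseq r p.1 ∧ 1 ≤ p.2 ∧ p.2 ≤ p.1.foldr max 0} =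
      ∑ l ∈ ncFinset r, maxLetter l := by
  let T := ((ncFinset r).sigma fun l => Icc 1 (maxLetter l)).map
    (Equiv.sigmaEquivProd _ _).toEmbedding
  have hT : ∀ p : List ℕ × ℕ,
      (NCseq r p.1 ∧ 1 ≤ p.2 ∧ p.2 ≤ p.1.foldr max 0) ↔ p ∈ T := by
    rintro ⟨l, k⟩
    simp [T, mem_ncFinset, maxLetter]
  rw [Nat.card_congr (Equiv.subtypeEquivRight hT), Nat.card_eq_finsetCard, card_map, card_sigma]
  simp

/-- The total number of blocks over all non-crossing partitions of [r] equals
binom(2r−1, r), for r ≥ 1.  (The number of blocks of π is the maximum letter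
of its canonical sequential form; the total is counted via pairs (π, j) with
1 ≤ j ≤ number of blocks of π.) -/
theorem stmt5 (r : ℕ) (hr : 1 ≤ r) :
    Nat.card {p : List ℕ × ℕ //
        NCseq r p.1 ∧ 1 ≤ p.2 ∧ p.2 ≤ p.1.foldr max 0} =
      Nat.choose (2 * r - 1) r := by
  obtain ⟨m, rfl⟩ := Nat.exists_eq_add_of_le' hr
  rw [natCard_markedBlocks_eq_sum_maxLetter, show 2 * (m + 1) - 1 = 2 * m + 1 by omega]
  exact_mod_cast sum_maxLetter_ncFinset m
end

section
/- The total number of ascents over all non-crossing partitions of [r] equals binom(2r−1, r) − C_r = binom(2r−1, r+1) for r ≥ 1, where C_r is the r-th Catalan number. -/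
/-!
A non-crossing partition of `[n + 1]`, written as its restricted growth sequence `π`, starts
with `1`; cutting `π` just before the next `1` writes it uniquely as `glue σ τ`, where `σ` (the
blocks nested under the first arc of the block of `1`) and `τ` (the rest, continuing the block
of `1`) are non-crossing partitions of sizes `i + j = n`. This gives the Catalan recursion for
`|NC_n|` and a recursion for the total number `B_n` of blocks, which for `n ≥ 1` solves to
`2 B_n = (n + 1) C_n = 2 binom(2n - 1, n)`. In a non-crossing restricted growth sequence the
ascents are exactly the steps into the first occurrence of a letter `≥ 2`, so a partition has one
ascent fewer than it has blocks.
-/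

namespace NCPartition

section Words

open List

/-- For a restricted growth sequence, this is the number of blocks. -/
def maxLetter (l : List ℕ) : ℕ := l.foldr max 0

@[simp] lemma maxLetter_nil : maxLetter [] = 0 := rfl

@[simp] lemma maxLetter_cons (a : ℕ) (l : List ℕ) : maxLetter (a :: l) = max a (maxLetter l) :=
  rfl

lemma maxLetter_append (s t : List ℕ) :
    maxLetter (s ++ t) = max (maxLetter s) (maxLetter t) := by
  induction s with
  | nil => simp
  | cons a s ih => simp [ih, max_assoc]

lemma le_maxLetter {a : ℕ} {l : List ℕ} (h : a ∈ l) : a ≤ maxLetter l := by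
  induction l with
  | nil => simp at h
  | cons b l ih =>
    rcases mem_cons.1 h with rfl | h
    · exact le_max_left _ _
    · exact (ih h).trans (le_max_right _ _)

lemma maxLetter_map_of_monotone {f : ℕ → ℕ} (hf : Monotone f) (h0 : f 0 = 0) (l : List ℕ) :
    maxLetter (l.map f) = f (maxLetter l) := by
  induction l with
  | nil => simp [h0]
  | cons a l ih => simp [ih, hf.map_max]

lemma max_one_maxLetter_map_succ (l : List ℕ) :
    max 1 (maxLetter (l.map (· + 1))) = maxLetter l + 1 := by
  induction l with
  | nil => simp
  | cons a l ih => simp only [map_cons, maxLetter_cons] at *; omega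

lemma getD_mem {α : Type*} {l : List α} {i : ℕ} (d : α) (h : i < l.length) : l.getD i d ∈ l := by
  rw [getD_eq_getElem _ _ h]
  exact getElem_mem h

/-- Restricted growth of a word read after a prefix whose largest letter is `m`. -/
def IsRGSFrom : ℕ → List ℕ → Prop
  | _, [] => True
  | m, x :: l => 1 ≤ x ∧ x ≤ m + 1 ∧ IsRGSFrom (max m x) l

@[simp] lemma isRGSFrom_nil (m : ℕ) : IsRGSFrom m [] := trivial

@[simp] lemma isRGSFrom_cons (m x : ℕ) (l : List ℕ) :
    IsRGSFrom m (x :: l) ↔ 1 ≤ x ∧ x ≤ m + 1 ∧ IsRGSFrom (max m x) l := Iff.rfl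

lemma isRGSFrom_iff_getElem {m : ℕ} {l : List ℕ} :
    IsRGSFrom m l ↔ (∀ x ∈ l, 1 ≤ x) ∧
      ∀ i (h : i < l.length), l[i] ≤ max m (maxLetter (l.take i)) + 1 := by
  induction l generalizing m with
  | nil => simp
  | cons x l ih =>
    simp only [isRGSFrom_cons, ih, mem_cons, forall_eq_or_imp, length_cons]
    constructor
    · rintro ⟨hx1, hxm, hpos, hl⟩
      refine ⟨⟨hx1, hpos⟩, fun i hi => ?_⟩
      cases i with
      | zero => simpa using hxm
      | succ i => simpa [max_assoc] using hl i (by omega)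
    · rintro ⟨⟨hx1, hpos⟩, hl⟩
      refine ⟨hx1, by simpa using hl 0 (by omega), hpos, fun i hi => ?_⟩
      have h := hl (i + 1) (by omega)
      simp only [getElem_cons_succ, take_succ_cons, maxLetter_cons, ← max_assoc] at h
      exact h

lemma isRGS_iff_isRGSFrom_zero {l : List ℕ} : IsRGS l ↔ IsRGSFrom 0 l := by
  rw [isRGSFrom_iff_getElem]
  cases l with
  | nil => simp [IsRGS]
  | cons x l =>
    simp only [IsRGS, maxLetter, length_cons, getD_cons_zero]
    constructor
    · rintro ⟨rfl, hpos, hstep⟩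
      refine ⟨hpos, fun i hi => ?_⟩
      cases i with
      | zero => simp
      | succ i =>
        have h := hstep i (by simpa using hi)
        rw [getD_eq_getElem _ _ hi] at h
        simpa using h
    · rintro ⟨hpos, hstep⟩
      refine ⟨?_, hpos, fun i hi => ?_⟩
      · have h1 := hstep 0 (by simp)
        have h2 := hpos x (by simp)
        simp only [getElem_cons_zero, take_zero, foldr_nil, max_self, zero_add] at h1
        omega
      · rw [getD_eq_getElem _ _ hi]
        simpa using hstep (i + 1) hi

lemma head?_eq_one_of_isRGS {l : List ℕ} (h : IsRGS l) : ∀ y ∈ l.head?, y = 1 := by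
  rcases l with _ | ⟨x, l⟩
  · simp
  · simpa using h.1

lemma one_le_maxLetter {l : List ℕ} (hR : IsRGS l) (hl : l ≠ []) : 1 ≤ maxLetter l := by
  obtain ⟨x, l, rfl⟩ := exists_cons_of_ne_nil hl
  have : x = 1 := by simpa using hR.1
  simp [this]

lemma isRGSFrom_append {m : ℕ} {s t : List ℕ} :
    IsRGSFrom m (s ++ t) ↔ IsRGSFrom m s ∧ IsRGSFrom (max m (maxLetter s)) t := by
  induction s generalizing m with
  | nil => simp
  | cons x s ih => simp [ih, max_assoc, and_assoc]

lemma mem_of_isRGSFrom {k v : ℕ} {l : List ℕ} (h : IsRGSFrom k l) (hkv : k < v)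
    (hv : v ≤ maxLetter l) : v ∈ l := by
  induction l generalizing k with
  | nil => simp at hv; omega
  | cons x l ih =>
    obtain ⟨-, hx, h⟩ := h
    by_cases hvx : v = x
    · simp [hvx]
    · exact mem_cons_of_mem x (ih h (by omega) (by simp at hv; omega))

lemma mem_of_isRGSFrom_append_cons {k a b : ℕ} {s t : List ℕ} (h : IsRGSFrom k (s ++ b :: t))
    (hka : k < a) (hab : a < b) : a ∈ s := by
  obtain ⟨hs, -, hb, -⟩ := isRGSFrom_append.1 h
  exact mem_of_isRGSFrom hs hka (by omega)

lemma maxLetter_le_of_isRGSFrom {k : ℕ} {l : List ℕ} (h : IsRGSFrom k l) :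
    maxLetter l ≤ k + l.length := by
  induction l generalizing k with
  | nil => simp
  | cons x l ih =>
    have := ih h.2.2
    have hkx : max k x ≤ k + 1 := max_le (by omega) h.2.1
    simp only [maxLetter_cons, length_cons]
    exact max_le (by omega) (by omega)

lemma isRGSFrom_map_succ {k : ℕ} {l : List ℕ} (hl : ∀ x ∈ l, 1 ≤ x) :
    IsRGSFrom (k + 1) (l.map (· + 1)) ↔ IsRGSFrom k l := by
  induction l generalizing k with
  | nil => simp
  | cons x l ih =>
    simp only [mem_cons, forall_eq_or_imp] at hl
    simp only [map_cons, isRGSFrom_cons, max_add_add_right, ih hl.2]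
    constructor <;> rintro ⟨h1, h2, h3⟩ <;> exact ⟨by omega, by omega, h3⟩

def bump (m v : ℕ) : ℕ := if v ≤ 1 then v else v + m

def unbump (m v : ℕ) : ℕ := if v ≤ 1 then v else v - m

lemma bump_strictMono (m : ℕ) : StrictMono (bump m) := by
  intro a b h
  unfold bump
  split_ifs <;> omega

lemma unbump_bump (m v : ℕ) : unbump m (bump m v) = v := by
  unfold bump unbump
  split_ifs <;> omega

lemma bump_unbump {m v : ℕ} (h : v ≤ 1 ∨ m + 2 ≤ v) : bump m (unbump m v) = v := by
  unfold bump unbump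
  split_ifs <;> omega

lemma isRGSFrom_map_bump {k m : ℕ} (hk : 1 ≤ k) {l : List ℕ} :
    IsRGSFrom (k + m) (l.map (bump m)) ↔ IsRGSFrom k l := by
  induction l generalizing k with
  | nil => simp
  | cons x l ih =>
    simp only [map_cons, isRGSFrom_cons]
    by_cases hx : 1 ≤ x
    · have hmax : max (k + m) (bump m x) = max k x + m := by
        unfold bump; split <;> simp only [max_def] <;> split_ifs <;> omega
      have hle : bump m x ≤ k + m + 1 ↔ x ≤ k + 1 := by unfold bump; split <;> omega
      have hpos : 1 ≤ bump m x := by unfold bump; split <;> omega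
      simp only [hmax, ih (le_max_of_le_left hk), hle, hx, hpos, true_and]
    · simp [bump, show x = 0 by omega]

lemma crossing_iff_sublist {l : List ℕ} : Crossing l ↔ ∃ a b, a < b ∧ [a, b, a, b] <+ l := by
  rw [Crossing]
  constructor
  · rintro ⟨i, j, k, m, hij, hjk, hkm, hm, hik, hjm, hlt⟩
    simp only [getD_eq_getElem _ _ (show i < l.length by omega),
      getD_eq_getElem _ _ (show j < l.length by omega),
      getD_eq_getElem _ _ (show k < l.length by omega), getD_eq_getElem _ _ hm] at hik hjm hlt
    refine ⟨_, _, hlt, sublist_iff_exists_fin_orderEmbedding_get_eq.2 ⟨OrderEmbedding.ofStrictMono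
      (fun t : Fin 4 => (⟨![i, j, k, m] t, by fin_cases t <;> simp <;> omega⟩ : Fin l.length))
      (Fin.strictMono_iff_lt_succ.2 fun t => by fin_cases t <;> simp <;> omega), fun t => ?_⟩⟩
    fin_cases t <;> simp [hik, hjm]
  · rintro ⟨a, b, hab, h⟩
    obtain ⟨f, hf⟩ := sublist_iff_exists_fin_orderEmbedding_get_eq.1 h
    have hmono : ∀ s t : Fin 4, s < t → (f s : ℕ) < f t := fun s t hst => f.strictMono hst
    have hval : ∀ t : Fin 4, l.getD (f t) 0 = [a, b, a, b].get t := fun t => by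
      rw [hf t, getD_eq_getElem _ _ (f t).2]; rfl
    refine ⟨f 0, f 1, f 2, f 3, hmono 0 1 (by decide), hmono 1 2 (by decide),
      hmono 2 3 (by decide), (f 3).2, ?_, ?_, ?_⟩ <;> simp only [hval] <;> simp [hab]

lemma Crossing.mono {l₁ l₂ : List ℕ} (h : l₁ <+ l₂) (hc : Crossing l₁) : Crossing l₂ := by
  obtain ⟨a, b, hab, hs⟩ := crossing_iff_sublist.1 hc
  exact crossing_iff_sublist.2 ⟨a, b, hab, hs.trans h⟩

lemma crossing_map_iff {f : ℕ → ℕ} (hf : StrictMono f) {l : List ℕ} :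
    Crossing (l.map f) ↔ Crossing l := by
  simp only [crossing_iff_sublist, sublist_map_iff]
  constructor
  · rintro ⟨a, b, hab, l', hl', hmap⟩
    rcases l' with _ | ⟨x, _ | ⟨y, _ | ⟨z, _ | ⟨w, _ | ⟨v, l'⟩⟩⟩⟩⟩ <;> simp at hmap
    obtain ⟨rfl, rfl, hzx, hwy⟩ := hmap
    obtain rfl := hf.injective hzx
    obtain rfl := hf.injective hwy
    exact ⟨x, y, hf.lt_iff_lt.1 hab, hl'⟩
  · rintro ⟨a, b, hab, h⟩
    exact ⟨f a, f b, hf hab, _, h, rfl⟩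

lemma crossing_append_of_disjoint {s t : List ℕ} (hst : ∀ x ∈ s, x ∉ t)
    (h : Crossing (s ++ t)) : Crossing s ∨ Crossing t := by
  obtain ⟨a, b, hab, h⟩ := crossing_iff_sublist.1 h
  obtain ⟨l₁, l₂, heq, h₁, h₂⟩ := sublist_append_iff.1 h
  have hs : ∀ x ∈ l₁, x ∈ s := fun x hx => h₁.subset hx
  have ht : ∀ x ∈ l₂, x ∈ t := fun x hx => h₂.subset hx
  rcases l₁ with _ | ⟨x, _ | ⟨y, _ | ⟨z, _ | ⟨w, _ | ⟨v, l₁⟩⟩⟩⟩⟩ <;>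
    simp only [nil_append, cons_append, cons.injEq] at heq
  · exact Or.inr (crossing_iff_sublist.2 ⟨a, b, hab, heq ▸ h₂⟩)
  · exact absurd (ht a (by simp [← heq.2])) (hst a (hs a (by simp [heq.1])))
  · exact absurd (ht a (by simp [← heq.2.2])) (hst a (hs a (by simp [heq.1])))
  · exact absurd (ht b (by simp [← heq.2.2.2])) (hst b (hs b (by simp [heq.2.1])))
  · obtain ⟨rfl, rfl, rfl, rfl, -⟩ := heq
    exact Or.inl (crossing_iff_sublist.2 ⟨a, b, hab, h₁⟩)
  · simp at heq

lemma crossing_cons_append {x : ℕ} {s t : List ℕ} (hx : x ∉ s) (hst : ∀ y ∈ s, y ∉ t)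
    (ht : ∀ y ∈ t.head?, y = x) (h : Crossing (x :: (s ++ t))) : Crossing s ∨ Crossing t := by
  obtain ⟨a, b, hab, h⟩ := crossing_iff_sublist.1 h
  rcases sublist_cons_iff.1 h with h | ⟨r, hr, h⟩
  · exact crossing_append_of_disjoint hst (crossing_iff_sublist.2 ⟨a, b, hab, h⟩)
  simp only [cons.injEq] at hr
  obtain ⟨rfl, rfl⟩ := hr
  obtain ⟨l₁, l₂, heq, h₁, h₂⟩ := sublist_append_iff.1 h
  have hs : ∀ y ∈ l₁, y ∈ s := fun y hy => h₁.subset hy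
  rcases l₁ with _ | ⟨y, _ | ⟨z, l₁⟩⟩ <;> simp only [nil_append, cons_append, cons.injEq] at heq
  · subst heq
    rcases t with _ | ⟨y, t⟩
    · simp at h₂
    have hy : y = a := ht y rfl
    subst y
    have h₂ : [b, a, b] <+ t := by
      rcases sublist_cons_iff.1 h₂ with h₂ | ⟨r, hr, -⟩
      · exact h₂
      · simp at hr; omega
    exact Or.inr (crossing_iff_sublist.2 ⟨a, b, hab, h₂.cons_cons a⟩)
  · obtain ⟨rfl, rfl⟩ := heq
    exact absurd (h₂.subset (by simp)) (hst b (hs b (by simp)))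
  · exact absurd (hs a (by simp [heq.2.1])) hx

lemma le_of_not_crossing {a v : ℕ} {u w : List ℕ} (h : ¬ Crossing (a :: (u ++ a :: w)))
    (hu : v ∈ u) (hw : v ∈ w) : v ≤ a := by
  by_contra hav
  exact h (crossing_iff_sublist.2 ⟨a, v, by omega,
    ((singleton_sublist.2 hu).append ((singleton_sublist.2 hw).cons_cons a)).cons_cons a⟩)

/-- `glue σ τ = 1 (σ + 1) τ'`, where `τ'` renumbers the blocks of `τ` other than its first after
those of `σ`: the block of `1` is `{1}` together with the first block of `τ`, and the blocks
of `σ` lie between its first two elements. -/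
def glue (σ τ : List ℕ) : List ℕ := 1 :: (σ.map (· + 1) ++ τ.map (bump (maxLetter σ)))

def unglue (π : List ℕ) : List ℕ × List ℕ :=
  let σ := (π.tail.takeWhile (· != 1)).map (· - 1)
  (σ, (π.tail.dropWhile (· != 1)).map (unbump (maxLetter σ)))

lemma length_glue (σ τ : List ℕ) : (glue σ τ).length = σ.length + τ.length + 1 := by
  simp [glue]

lemma maxLetter_glue (σ τ : List ℕ) :
    maxLetter (glue σ τ) = maxLetter σ + max 1 (maxLetter τ) := by
  rw [glue, maxLetter_cons, maxLetter_append, ← max_assoc, max_one_maxLetter_map_succ,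
    maxLetter_map_of_monotone (bump_strictMono _).monotone rfl]
  unfold bump
  split <;> omega

lemma isRGS_glue_iff {σ τ : List ℕ} (hσ : ∀ x ∈ σ, 1 ≤ x) (hτ : ∀ y ∈ τ.head?, y = 1) :
    IsRGS (glue σ τ) ↔ IsRGS σ ∧ IsRGS τ := by
  have hτ' : IsRGSFrom (maxLetter σ + 1) (τ.map (bump (maxLetter σ))) ↔ IsRGSFrom 0 τ := by
    rcases τ with _ | ⟨y, τ⟩
    · simp
    obtain rfl : y = 1 := hτ y rfl
    have h1 : max (maxLetter σ + 1) (bump (maxLetter σ) 1) = 1 + maxLetter σ := by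
      simp [bump]; omega
    simp only [map_cons, isRGSFrom_cons, h1, isRGSFrom_map_bump le_rfl]
    simp [bump]
  simp only [isRGS_iff_isRGSFrom_zero, glue, isRGSFrom_cons, isRGSFrom_append]
  rw [show max 0 1 = 0 + 1 from rfl, isRGSFrom_map_succ hσ, max_one_maxLetter_map_succ, hτ']
  simp

lemma crossing_glue_iff {σ τ : List ℕ} (hσ : ∀ x ∈ σ, 1 ≤ x) (hτ : ∀ y ∈ τ.head?, y = 1) :
    Crossing (glue σ τ) ↔ Crossing σ ∨ Crossing τ := by
  rw [← crossing_map_iff (add_left_strictMono (a := 1)) (l := σ),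
    ← crossing_map_iff (bump_strictMono (maxLetter σ)) (l := τ)]
  constructor
  · refine crossing_cons_append ?_ ?_ ?_
    · simp only [mem_map, not_exists, not_and]
      intro x hx
      have := hσ x hx
      omega
    · simp only [mem_map]
      rintro _ ⟨x, hx, rfl⟩ ⟨z, -, hzx⟩
      have := hσ x hx
      have := le_maxLetter hx
      unfold bump at hzx
      split at hzx <;> omega
    · rcases τ with _ | ⟨y, τ⟩
      · simp
      · simp [hτ y rfl, bump]
  · rintro (h | h)
    · exact Crossing.mono ((sublist_append_left _ _).cons 1) h
    · exact Crossing.mono ((sublist_append_right _ _).cons 1) h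

lemma unglue_glue {σ τ : List ℕ} (hσ : ∀ x ∈ σ, 1 ≤ x) (hτ : ∀ y ∈ τ.head?, y = 1) :
    unglue (glue σ τ) = (σ, τ) := by
  have hS : ∀ x ∈ σ.map (· + 1), (x != 1) = true := by
    simp only [mem_map, bne_iff_ne]
    rintro _ ⟨x, hx, rfl⟩
    have := hσ x hx
    omega
  have hT : (τ.map (bump (maxLetter σ))).takeWhile (· != 1) = [] ∧
      (τ.map (bump (maxLetter σ))).dropWhile (· != 1) = τ.map (bump (maxLetter σ)) := by
    rcases τ with _ | ⟨y, τ⟩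
    · simp
    · simp [hτ y rfl, bump]
  have hσ' : (σ.map (· + 1)).map (· - 1) = σ := by simp [map_map, Function.comp_def]
  simp only [unglue, glue, tail_cons, takeWhile_append_of_pos hS, dropWhile_append_of_pos hS,
    hT.1, hT.2, append_nil, hσ', map_map]
  simp [Function.comp_def, unbump_bump]

lemma two_le_of_mem_takeWhile {l : List ℕ} (hl : ∀ x ∈ l, 1 ≤ x) {v : ℕ}
    (hv : v ∈ l.takeWhile (· != 1)) : 2 ≤ v := by
  have h1 := hl v ((takeWhile_sublist _).subset hv)
  have h2 := mem_takeWhile_imp hv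
  simp only [bne_iff_ne] at h2
  omega

lemma head?_dropWhile_ne (a : ℕ) (l : List ℕ) : ∀ y ∈ (l.dropWhile (· != a)).head?, y = a := by
  intro y hy
  have := head?_dropWhile_not (· != a) l
  rw [Option.mem_def.1 hy] at this
  simpa using this

lemma maxLetter_takeWhile_lt {l : List ℕ} (hR : IsRGS (1 :: l)) (hNC : ¬ Crossing (1 :: l))
    {v : ℕ} (hv : v ∈ l.dropWhile (· != 1)) (hv1 : v ≠ 1) :
    maxLetter (l.takeWhile (· != 1)) < v := by
  have hl : l = l.takeWhile (· != 1) ++ l.dropWhile (· != 1) := takeWhile_append_dropWhile.symm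
  rcases hw : l.dropWhile (· != 1) with _ | ⟨y, w⟩
  · simp [hw] at hv
  obtain rfl : y = 1 := head?_dropWhile_ne 1 l y (by simp [hw])
  rw [hw] at hl hv
  have hgrow : IsRGSFrom 1 (l.takeWhile (· != 1)) := by
    have := (isRGS_iff_isRGSFrom_zero.1 hR).2.2
    rw [hl] at this
    exact (isRGSFrom_append.1 this).1
  have hv2 : 2 ≤ v := by
    have := hR.2.1 v (mem_cons_of_mem 1 (by rw [hl]; exact mem_append_right _ hv))
    omega
  -- otherwise `v` also occurs before the second `1`, and `1 v 1 v` is a crossing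
  by_contra! hle
  have := le_of_not_crossing (by rwa [hl] at hNC) (mem_of_isRGSFrom hgrow hv2 hle)
    ((mem_cons.1 hv).resolve_left hv1)
  omega

lemma glue_unglue {π : List ℕ} (hR : IsRGS π) (hNC : ¬ Crossing π) (hπ : π ≠ []) :
    glue (unglue π).1 (unglue π).2 = π := by
  obtain ⟨x, l, rfl⟩ := exists_cons_of_ne_nil hπ
  obtain rfl : x = 1 := by simpa using hR.1
  have hpos : ∀ v ∈ l, 1 ≤ v := fun v hv => hR.2.1 v (mem_cons_of_mem 1 hv)
  have hm : maxLetter ((l.takeWhile (· != 1)).map (· - 1)) = maxLetter (l.takeWhile (· != 1)) - 1 :=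
    maxLetter_map_of_monotone (fun a b h => Nat.sub_le_sub_right h 1) rfl _
  simp only [unglue, glue, tail_cons, hm, map_map]
  conv_rhs => rw [← takeWhile_append_dropWhile (p := (· != 1)) (l := l)]
  congr 2
  · refine (map_congr_left fun v hv => ?_).trans (map_id _)
    have := two_le_of_mem_takeWhile hpos hv
    simp only [Function.comp_apply, id_eq]
    omega
  · refine (map_congr_left fun v hv => bump_unbump ?_).trans (map_id _)
    have := hpos v ((dropWhile_sublist _).subset hv)
    by_cases hv1 : v = 1
    · omega
    · have := maxLetter_takeWhile_lt hR hNC hv hv1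
      omega

lemma one_le_of_mem_unglue_fst {π : List ℕ} (hR : IsRGS π) : ∀ x ∈ (unglue π).1, 1 ≤ x := by
  simp only [unglue, mem_map]
  rintro _ ⟨v, hv, rfl⟩
  have := two_le_of_mem_takeWhile (fun x hx => hR.2.1 x (mem_of_mem_tail hx)) hv
  omega

lemma head?_unglue_snd (π : List ℕ) : ∀ y ∈ (unglue π).2.head?, y = 1 := by
  simp only [unglue, head?_map, Option.mem_def, Option.map_eq_some_iff]
  rintro _ ⟨y, hy, rfl⟩
  simp [head?_dropWhile_ne 1 π.tail y hy, unbump]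

lemma ncseq_glue {i j : ℕ} {σ τ : List ℕ} (hσ : NCseq i σ) (hτ : NCseq j τ) :
    NCseq (i + j + 1) (glue σ τ) := by
  have hσ1 := hσ.2.1.2.1
  have hτ1 := head?_eq_one_of_isRGS hτ.2.1
  refine ⟨by rw [length_glue, hσ.1, hτ.1], (isRGS_glue_iff hσ1 hτ1).2 ⟨hσ.2.1, hτ.2.1⟩, ?_⟩
  rw [crossing_glue_iff hσ1 hτ1]
  exact not_or.2 ⟨hσ.2.2, hτ.2.2⟩

lemma ncseq_unglue {n : ℕ} {π : List ℕ} (h : NCseq (n + 1) π) :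
    NCseq (unglue π).1.length (unglue π).1 ∧ NCseq (unglue π).2.length (unglue π).2 ∧
      (unglue π).1.length + (unglue π).2.length = n := by
  have hπ : π ≠ [] := ne_nil_of_length_pos (by rw [h.1]; omega)
  obtain ⟨hlen, hR, hNC⟩ := h
  have hglue := glue_unglue hR hNC hπ
  have hσ := one_le_of_mem_unglue_fst hR
  have hτ := head?_unglue_snd π
  rw [← hglue] at hlen hR hNC
  rw [isRGS_glue_iff hσ hτ] at hR
  rw [crossing_glue_iff hσ hτ, not_or] at hNC
  rw [length_glue] at hlen
  exact ⟨⟨rfl, hR.1, hNC.1⟩, ⟨rfl, hR.2, hNC.2⟩, by omega⟩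

lemma finite_setOf_ncseq (n : ℕ) : {l : List ℕ | NCseq n l}.Finite := by
  refine ((finite_length_eq (Fin (n + 1)) n).image (map Fin.val)).subset ?_
  rintro l ⟨hlen, hR, -⟩
  have hle : ∀ x ∈ l, x < n + 1 := fun x hx => by
    have := le_maxLetter hx
    have := maxLetter_le_of_isRGSFrom (isRGS_iff_isRGSFrom_zero.1 hR)
    omega
  exact ⟨l.pmap (fun x hx => (⟨x, hx⟩ : Fin (n + 1))) hle, by simpa using hlen, by simp [map_pmap]⟩

noncomputable def ncFinset (n : ℕ) : Finset (List ℕ) := (finite_setOf_ncseq n).toFinset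

@[simp] lemma mem_ncFinset {n : ℕ} {l : List ℕ} : l ∈ ncFinset n ↔ NCseq n l :=
  Set.Finite.mem_toFinset _

def ascents (l : List ℕ) : Finset ℕ :=
  (Finset.range (l.length - 1)).filter fun i => l.getD i 0 < l.getD (i + 1) 0

lemma mem_ascents {l : List ℕ} {i : ℕ} :
    i ∈ ascents l ↔ i + 1 < l.length ∧ l.getD i 0 < l.getD (i + 1) 0 := by
  simp only [ascents, Finset.mem_filter, Finset.mem_range]
  omega

lemma not_mem_of_ascent {s t : List ℕ} {a b : ℕ} (hR : IsRGS (s ++ a :: b :: t))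
    (hNC : ¬ Crossing (s ++ a :: b :: t)) (hab : a < b) : b ∉ s := by
  intro hb
  obtain ⟨s₁, s₂, rfl⟩ := append_of_mem hb
  have ha : a ∈ s₁ := by
    refine mem_of_isRGSFrom_append_cons (k := 0) (t := s₂ ++ a :: b :: t) ?_ ?_ hab
    · simpa using isRGS_iff_isRGSFrom_zero.1 hR
    · exact hR.2.1 a (by simp)
  have hab' : [a, b] <+ s₂ ++ a :: b :: t := sublist_append_of_sublist_right (by simp)
  exact hNC (crossing_iff_sublist.2
    ⟨a, b, hab, by simpa using (singleton_sublist.2 ha).append (hab'.cons_cons b)⟩)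

lemma getD_ne_of_ascent {l : List ℕ} (hR : IsRGS l) (hNC : ¬ Crossing l) {i p : ℕ}
    (hi : i + 1 < l.length) (hasc : l.getD i 0 < l.getD (i + 1) 0) (hp : p ≤ i) :
    l.getD p 0 ≠ l.getD (i + 1) 0 := by
  rcases hp.lt_or_eq with hp | rfl
  · have hsplit : l = l.take i ++ l.getD i 0 :: l.getD (i + 1) 0 :: l.drop (i + 2) := by
      rw [getD_eq_getElem _ _ (by omega), getD_eq_getElem _ _ hi, ← drop_eq_getElem_cons hi,
        ← drop_eq_getElem_cons, take_append_drop]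
    have hmem : l.getD p 0 ∈ l.take i := by
      rw [getD_eq_getElem _ _ (by omega)]
      exact mem_iff_getElem.2 ⟨p, by simp; omega, by simp⟩
    intro heq
    rw [hsplit] at hR hNC
    exact not_mem_of_ascent hR hNC hasc (heq ▸ hmem)
  · exact hasc.ne

lemma exists_first_occurrence {l : List ℕ} (hR : IsRGS l) {v : ℕ} (hv2 : 2 ≤ v)
    (hv : v ≤ maxLetter l) : ∃ s t, l = s ++ v :: t ∧ s ≠ [] ∧ ∀ x ∈ s, x < v := by
  have hR0 := isRGS_iff_isRGSFrom_zero.1 hR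
  have hvl : v ∈ l := mem_of_isRGSFrom hR0 (by omega) hv
  have hvs : v ∉ l.takeWhile (· != v) := fun h => by simpa using mem_takeWhile_imp h
  have hsplit := (takeWhile_append_dropWhile (p := (· != v)) (l := l)).symm
  rcases ht : l.dropWhile (· != v) with _ | ⟨y, t⟩
  · rw [ht, append_nil] at hsplit
    exact absurd (hsplit ▸ hvl) hvs
  have hy : y = v := head?_dropWhile_ne v l y (by simp [ht])
  subst y
  rw [ht] at hsplit
  rw [hsplit] at hR0
  have hlt : maxLetter (l.takeWhile (· != v)) < v := by
    by_contra! hle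
    exact hvs (mem_of_isRGSFrom (isRGSFrom_append.1 hR0).1 (by omega) hle)
  refine ⟨_, t, hsplit, fun hs => ?_, fun x hx => (le_maxLetter hx).trans_lt hlt⟩
  simp only [hs, nil_append, isRGSFrom_cons] at hR0
  omega

lemma exists_mem_ascents_getD_eq {l : List ℕ} (hR : IsRGS l) {v : ℕ} (hv2 : 2 ≤ v)
    (hv : v ≤ maxLetter l) : ∃ i ∈ ascents l, l.getD (i + 1) 0 = v := by
  obtain ⟨s, t, rfl, hs, hlt⟩ := exists_first_occurrence hR hv2 hv
  have hslen : 0 < s.length := length_pos_iff.2 hs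
  have hv' : (s ++ v :: t).getD (s.length - 1 + 1) 0 = v := by
    rw [Nat.sub_add_cancel hslen, getD_append_right _ _ _ _ le_rfl]
    simp
  have hlast : (s ++ v :: t).getD (s.length - 1) 0 ∈ s := by
    rw [getD_append _ _ _ _ (by omega)]
    exact getD_mem 0 (by omega)
  refine ⟨s.length - 1, mem_ascents.2 ⟨?_, ?_⟩, hv'⟩
  · simp only [length_append, length_cons]
    omega
  · rw [hv']
    exact hlt _ hlast

theorem card_ascents {l : List ℕ} (hR : IsRGS l) (hNC : ¬ Crossing l) :
    (ascents l).card = maxLetter l - 1 := by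
  rw [show maxLetter l - 1 = maxLetter l + 1 - 2 by omega, ← Nat.card_Icc]
  refine Finset.card_nbij (fun i => l.getD (i + 1) 0) (fun i hi => ?_) (fun i hi j hj hij => ?_)
    (fun v hv => ?_)
  · rw [Finset.mem_coe, mem_ascents] at hi
    have := hR.2.1 _ (getD_mem (i := i) 0 (by omega))
    exact Finset.mem_Icc.2 ⟨by dsimp only; omega, le_maxLetter (getD_mem 0 hi.1)⟩
  · rw [Finset.mem_coe, mem_ascents] at hi hj
    rcases lt_trichotomy i j with h | h | h
    · exact absurd hij (getD_ne_of_ascent hR hNC hj.1 hj.2 h)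
    · exact h
    · exact absurd hij.symm (getD_ne_of_ascent hR hNC hi.1 hi.2 h)
  · rw [Finset.mem_coe, Finset.mem_Icc] at hv
    exact exists_mem_ascents_getD_eq hR hv.1 hv.2

end Words

section Counting

open Finset

lemma ncFinset_zero : ncFinset 0 = {[]} := by
  ext l
  simp only [mem_ncFinset, mem_singleton]
  constructor
  · exact fun h => List.eq_nil_of_length_eq_zero h.1
  · rintro rfl
    exact ⟨rfl, by simp [isRGS_iff_isRGSFrom_zero], fun h => by simp [crossing_iff_sublist] at h⟩

lemma sum_ncFinset_succ {M : Type*} [AddCommMonoid M] (f : List ℕ → M) (n : ℕ) :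
    ∑ π ∈ ncFinset (n + 1), f π =
      ∑ p ∈ antidiagonal n, ∑ σ ∈ ncFinset p.1, ∑ τ ∈ ncFinset p.2, f (glue σ τ) := by
  simp_rw [← sum_product']
  rw [sum_sigma']
  symm
  refine sum_nbij' (fun x => glue x.2.1 x.2.2)
    (fun π => ⟨((unglue π).1.length, (unglue π).2.length), unglue π⟩) ?_ ?_ ?_ ?_ (fun _ _ => rfl)
  · rintro ⟨⟨i, j⟩, σ, τ⟩ hx
    simp only [mem_sigma, HasAntidiagonal.mem_antidiagonal, mem_product, mem_ncFinset] at hx ⊢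
    rw [← hx.1]
    exact ncseq_glue hx.2.1 hx.2.2
  · intro π hπ
    obtain ⟨hσ, hτ, hlen⟩ := ncseq_unglue (mem_ncFinset.1 hπ)
    simp only [mem_sigma, HasAntidiagonal.mem_antidiagonal, mem_product, mem_ncFinset]
    exact ⟨hlen, hσ, hτ⟩
  · rintro ⟨⟨i, j⟩, σ, τ⟩ hx
    simp only [mem_sigma, HasAntidiagonal.mem_antidiagonal, mem_product, mem_ncFinset] at hx
    rw [unglue_glue hx.2.1.2.1.2.1 (head?_eq_one_of_isRGS hx.2.2.2.1), hx.2.1.1, hx.2.2.1]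
  · intro π hπ
    have h := mem_ncFinset.1 hπ
    exact glue_unglue h.2.1 h.2.2 (List.ne_nil_of_length_pos (by rw [h.1]; omega))

theorem card_ncFinset (n : ℕ) : #(ncFinset n) = catalan n := by
  induction n using Nat.strong_induction_on with
  | _ n ih =>
    rcases n with _ | n
    · simp [ncFinset_zero]
    rw [card_eq_sum_ones, sum_ncFinset_succ, catalan_succ']
    refine sum_congr rfl fun p hp => ?_
    have hp := mem_antidiagonal.1 hp
    simp [ih p.1 (by omega), ih p.2 (by omega)]

lemma sum_max_one_maxLetter (n : ℕ) :
    ∑ π ∈ ncFinset n, max 1 (maxLetter π) =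
      ∑ π ∈ ncFinset n, maxLetter π + if n = 0 then 1 else 0 := by
  rcases n with _ | n
  · simp [ncFinset_zero]
  rw [if_neg n.succ_ne_zero, add_zero]
  refine sum_congr rfl fun π hπ => max_eq_right (one_le_maxLetter (mem_ncFinset.1 hπ).2.1 ?_)
  exact List.ne_nil_of_length_pos (by rw [(mem_ncFinset.1 hπ).1]; omega)

lemma sum_maxLetter_ncFinset_succ (n : ℕ) :
    ∑ π ∈ ncFinset (n + 1), maxLetter π =
      ∑ p ∈ antidiagonal n, ((∑ σ ∈ ncFinset p.1, maxLetter σ) * catalan p.2 +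
        catalan p.1 * (∑ τ ∈ ncFinset p.2, maxLetter τ + if p.2 = 0 then 1 else 0)) := by
  rw [sum_ncFinset_succ]
  refine sum_congr rfl fun p _ => ?_
  simp only [maxLetter_glue, sum_add_distrib, sum_const, card_ncFinset, smul_eq_mul, mul_sum,
    ← sum_max_one_maxLetter, mul_comm]

lemma sum_antidiagonal_ite_fst {M : Type*} [AddCommMonoid M] (n : ℕ) (f : ℕ → M) :
    ∑ p ∈ antidiagonal n, (if p.1 = 0 then f p.2 else 0) = f n := by
  rw [sum_eq_single (0, n) (fun p hp hne => if_neg fun h => hne ?_) (by simp)]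
  · simp
  · have := mem_antidiagonal.1 hp
    ext <;> simp <;> omega

lemma two_mul_add_ite_eq_of_recursion {T : ℕ → ℕ} (h0 : T 0 = 0)
    (hrec : ∀ n, T (n + 1) = ∑ p ∈ antidiagonal n,
      (T p.1 * catalan p.2 + catalan p.1 * (T p.2 + if p.2 = 0 then 1 else 0))) (n : ℕ) :
    2 * T n + (if n = 0 then 1 else 0) = (n + 1) * catalan n := by
  induction n using Nat.strong_induction_on with
  | _ n ih =>
    rcases n with _ | n
    · simp [h0]
    have hterm : ∀ p ∈ antidiagonal n,
        2 * (T p.1 * catalan p.2 + catalan p.1 * (T p.2 + if p.2 = 0 then 1 else 0)) +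
            (if p.1 = 0 then catalan p.2 else 0) =
          (n + 2) * (catalan p.1 * catalan p.2) + (if p.2 = 0 then catalan p.1 else 0) := by
      rintro ⟨i, j⟩ hp
      obtain rfl : i + j = n := mem_antidiagonal.1 hp
      have hi := ih i (by omega)
      have hj := ih j (by omega)
      calc 2 * (T i * catalan j + catalan i * (T j + if j = 0 then 1 else 0)) +
            (if i = 0 then catalan j else 0)
          = (2 * T i + if i = 0 then 1 else 0) * catalan j +
              catalan i * (2 * T j + if j = 0 then 1 else 0) +
              catalan i * (if j = 0 then 1 else 0) := by split_ifs <;> ring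
        _ = (i + j + 2) * (catalan i * catalan j) + (if j = 0 then catalan i else 0) := by
          rw [hi, hj]; split_ifs <;> ring
    have hsnd : ∑ p ∈ antidiagonal n, (if p.2 = 0 then catalan p.1 else 0) = catalan n := by
      rw [← Nat.sum_antidiagonal_swap]
      exact sum_antidiagonal_ite_fst n catalan
    have hsum := sum_congr rfl hterm
    rw [sum_add_distrib, sum_add_distrib, ← mul_sum, ← mul_sum, sum_antidiagonal_ite_fst, hsnd,
      ← catalan_succ', ← hrec] at hsum
    rw [if_neg n.succ_ne_zero, add_zero, show n + 1 + 1 = n + 2 from rfl]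
    omega

lemma two_mul_choose_two_mul_sub_one {r : ℕ} (hr : 1 ≤ r) :
    2 * (2 * r - 1).choose r = (r + 1) * catalan r := by
  obtain ⟨s, rfl⟩ : ∃ s, r = s + 1 := ⟨r - 1, by omega⟩
  rw [succ_mul_catalan_eq_centralBinom, Nat.centralBinom_eq_two_mul_choose,
    show 2 * (s + 1) - 1 = 2 * s + 1 by omega, show 2 * (s + 1) = 2 * s + 1 + 1 by ring,
    Nat.choose_succ_succ (2 * s + 1) s, Nat.choose_symm_half]
  ring

lemma choose_sub_catalan {r : ℕ} (hr : 1 ≤ r) :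
    (2 * r - 1).choose r - catalan r = (2 * r - 1).choose (r + 1) := by
  have hA := two_mul_choose_two_mul_sub_one hr
  obtain ⟨s, rfl⟩ : ∃ s, r = s + 1 := ⟨r - 1, by omega⟩
  have hB := Nat.choose_succ_right_eq (2 * (s + 1) - 1) (s + 1)
  rw [show 2 * (s + 1) - 1 - (s + 1) = s by omega] at hB
  suffices h : (2 * (s + 1) - 1).choose (s + 1 + 1) + catalan (s + 1) =
      (2 * (s + 1) - 1).choose (s + 1) by omega
  refine Nat.eq_of_mul_eq_mul_right (show 0 < s + 1 + 1 by omega) ?_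
  rw [add_mul, hB, mul_comm (catalan _), ← hA]
  ring

theorem sum_maxLetter_ncFinset {n : ℕ} (hn : 1 ≤ n) :
    ∑ π ∈ ncFinset n, maxLetter π = (2 * n - 1).choose n := by
  have h := two_mul_add_ite_eq_of_recursion (T := fun n => ∑ π ∈ ncFinset n, maxLetter π)
    (by simp [ncFinset_zero]) sum_maxLetter_ncFinset_succ n
  rw [if_neg (by omega), add_zero, ← two_mul_choose_two_mul_sub_one hn] at h
  omega

lemma natCard_ascent_pairs (r : ℕ) :
    Nat.card {p : List ℕ × ℕ //
        NCseq r p.1 ∧ p.2 + 1 < r ∧ p.1.getD p.2 0 < p.1.getD (p.2 + 1) 0} =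
      ∑ π ∈ ncFinset r, #(ascents π) := by
  rw [← card_sigma, ← Nat.card_eq_finsetCard]
  refine Nat.card_congr ((Equiv.sigmaEquivProd _ _).symm.subtypeEquiv fun p => ?_)
  simp only [Equiv.sigmaEquivProd_symm_apply, mem_sigma, mem_ncFinset, mem_ascents]
  constructor
  · rintro ⟨h, hlt, hasc⟩
    exact ⟨h, by rw [h.1]; exact hlt, hasc⟩
  · rintro ⟨h, hlt, hasc⟩
    exact ⟨h, by rw [← h.1]; exact hlt, hasc⟩

lemma sum_card_ascents {r : ℕ} (hr : 1 ≤ r) :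
    ∑ π ∈ ncFinset r, #(ascents π) = ∑ π ∈ ncFinset r, maxLetter π - catalan r := by
  rw [← card_ncFinset, card_eq_sum_ones, ← sum_tsub_distrib]
  · exact sum_congr rfl fun π hπ => card_ascents (mem_ncFinset.1 hπ).2.1 (mem_ncFinset.1 hπ).2.2
  · intro π hπ
    have h := mem_ncFinset.1 hπ
    exact one_le_maxLetter h.2.1 (List.ne_nil_of_length_pos (by rw [h.1]; omega))

end Counting

end NCPartition

/-- The total number of ascents over all non-crossing partitions of [r] equals
binom(2r−1, r) − C_r = binom(2r−1, r+1), for r ≥ 1. -/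
theorem stmt7 (r : ℕ) (hr : 1 ≤ r) :
    Nat.card {p : List ℕ × ℕ //
        NCseq r p.1 ∧ p.2 + 1 < r ∧ p.1.getD p.2 0 < p.1.getD (p.2 + 1) 0} =
      Nat.choose (2 * r - 1) r - catalan r ∧
    Nat.choose (2 * r - 1) r - catalan r = Nat.choose (2 * r - 1) (r + 1) := by
  rw [NCPartition.natCard_ascent_pairs, NCPartition.sum_card_ascents hr,
    NCPartition.sum_maxLetter_ncFinset hr]
  exact ⟨rfl, NCPartition.choose_sub_catalan hr⟩
end

section
/- For all n ≥ 0, the subword patterns 211 and 221 are equidistributed on non-crossing partitions of [n]: the number of members of NC_n with exactly k occurrences of 211 equals the number with exactly k occurrences of 221, for every k ≥ 0. -/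
/-!
Write a word as its sequence of runs `(v₁, m₁), …, (vᵣ, mᵣ)` (maximal blocks of equal letters).
An occurrence of `211` is a descent `vⱼ₋₁ > vⱼ` into a run with `mⱼ ≥ 2`, an occurrence of `221`
a descent `vⱼ > vⱼ₊₁` out of a run with `mⱼ ≥ 2`. Cut the run sequence into maximal strictly
decreasing chains of values and reverse the multiplicities inside each chain: the runs of length
`≥ 2` other than the first of a chain (its `211`s) become runs of length `≥ 2` other than the last
(its `221`s). This involution keeps the sequence of run values and the length, and whether a word
is the canonical form of a non-crossing partition of `[n]` depends on these two data alone.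
-/

open List

namespace NCSubword

/-! ### Run-length encoding -/

-- A run `(v, e)` stands for `e + 1` consecutive copies of `v`, so runs are never empty.
def ofRuns (rs : List (ℕ × ℕ)) : List ℕ := rs.flatMap fun p => replicate (p.2 + 1) p.1

def IsRuns (rs : List (ℕ × ℕ)) : Prop := rs.IsChain fun p q => p.1 ≠ q.1

def toRuns (l : List ℕ) : List (ℕ × ℕ) :=
  (l.splitBy (· == ·)).map fun g => (g.headD 0, g.length - 1)

@[simp] lemma ofRuns_nil : ofRuns [] = [] := rfl

@[simp] lemma ofRuns_cons (v e : ℕ) (rs : List (ℕ × ℕ)) :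
    ofRuns ((v, e) :: rs) = replicate (e + 1) v ++ ofRuns rs := rfl

lemma ofRuns_cons_succ (v e : ℕ) (rs : List (ℕ × ℕ)) :
    ofRuns ((v, e + 1) :: rs) = v :: ofRuns ((v, e) :: rs) := rfl

lemma head?_ofRuns (rs : List (ℕ × ℕ)) : (ofRuns rs).head? = rs.head?.map Prod.fst := by
  rcases rs with _ | ⟨⟨v, e⟩, rs⟩ <;> simp [replicate_succ]

lemma length_ofRuns (rs : List (ℕ × ℕ)) :
    (ofRuns rs).length = rs.length + (rs.map Prod.snd).sum := by
  induction rs with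
  | nil => rfl
  | cons p rs ih =>
    obtain ⟨v, e⟩ := p
    simp only [ofRuns_cons, length_append, length_replicate, ih, length_cons, map_cons, sum_cons]
    omega

lemma IsRuns.tail {p : ℕ × ℕ} {rs : List (ℕ × ℕ)} (h : IsRuns (p :: rs)) : IsRuns rs :=
  (isChain_cons.1 h).2

lemma IsRuns.head?_ofRuns_ne {v e : ℕ} {rs : List (ℕ × ℕ)} (h : IsRuns ((v, e) :: rs)) :
    (ofRuns rs).head? ≠ some v := by
  rw [head?_ofRuns]
  rcases rs with _ | ⟨⟨w, f⟩, rs⟩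
  · simp
  · simpa [eq_comm] using (isChain_cons_cons.1 h).1

lemma eq_replicate_of_mem_splitBy_beq {l g : List ℕ} (hg : g ∈ l.splitBy (· == ·)) :
    g = replicate (g.length - 1 + 1) (g.headD 0) := by
  have hne := ne_nil_of_mem_splitBy hg
  have hchain : g.IsChain (· = ·) := (isChain_of_mem_splitBy hg).imp fun _ _ => beq_iff_eq.1
  obtain ⟨a, g, rfl⟩ := exists_cons_of_ne_nil hne
  simpa [replicate_succ] using isChain_cons_eq_iff_eq_replicate.1 hchain

lemma ofRuns_toRuns (l : List ℕ) : ofRuns (toRuns l) = l := by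
  conv_rhs => rw [← flatten_splitBy (· == ·) l]
  rw [ofRuns, toRuns, flatMap_map, flatMap_def]
  exact congrArg flatten <|
    (map_congr_left fun g hg => (eq_replicate_of_mem_splitBy_beq hg).symm).trans (map_id' _)

lemma isRuns_toRuns (l : List ℕ) : IsRuns (toRuns l) := by
  refine isChain_map _ |>.2 <| (isChain_getLast_head_splitBy _ l).imp_of_mem_imp ?_
  rintro g g' hg hg' ⟨hne, hne', hlast⟩
  have hlast_eq : g.getLast hne = g.headD 0 :=
    (eq_replicate_iff.1 (eq_replicate_of_mem_splitBy_beq hg)).2 _ (getLast_mem hne)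
  have hhead_eq : g'.head hne' = g'.headD 0 :=
    (eq_replicate_iff.1 (eq_replicate_of_mem_splitBy_beq hg')).2 _ (head_mem hne')
  simpa [hlast_eq, hhead_eq] using hlast

lemma toRuns_ofRuns {rs : List (ℕ × ℕ)} (h : IsRuns rs) : toRuns (ofRuns rs) = rs := by
  have hsplit : (ofRuns rs).splitBy (· == ·) = rs.map fun p => replicate (p.2 + 1) p.1 := by
    refine splitBy_flatten (by simp) ?_ ?_
    · simp only [mem_map, forall_exists_index, and_imp]
      rintro _ p - rfl
      exact isChain_replicate_of_rel _ (beq_self_eq_true _)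
    refine isChain_map _ |>.2 <| h.imp fun p q hpq => ?_
    simpa using hpq
  simp [toRuns, hsplit, replicate_succ, Function.comp_def]

/-! ### Reversing multiplicities along descending chains -/

section SplitBy

variable {α β : Type*}

lemma getLast_map_eq_of_map_eq {g : α → β} {l l' : List α} (h : l.map g = l'.map g)
    (hl : l ≠ []) (hl' : l' ≠ []) : g (l.getLast hl) = g (l'.getLast hl') := by
  rw [← getLast_map (f := g) (by simpa using hl), ← getLast_map (f := g) (by simpa using hl')]
  exact getLast_congr _ _ h

lemma head_map_eq_of_map_eq {g : α → β} {l l' : List α} (h : l.map g = l'.map g)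
    (hl : l ≠ []) (hl' : l' ≠ []) : g (l.head hl) = g (l'.head hl') := by
  rw [← head_map (f := g) (by simpa using hl), ← head_map (f := g) (by simpa using hl')]
  simp only [h]

lemma splitBy_flatten_map_splitBy (r : β → β → Bool) (g : α → β) {f : List α → List α}
    (hf : ∀ c, (f c).map g = c.map g) (l : List α) :
    (((l.splitBy fun x y => r (g x) (g y)).map f).flatten.splitBy fun x y => r (g x) (g y)) =
      (l.splitBy fun x y => r (g x) (g y)).map f := by
  have hf_nil : ∀ c, f c ≠ [] ↔ c ≠ [] := fun c => by
    rw [ne_eq, ne_eq, ← map_eq_nil_iff (f := g), hf, map_eq_nil_iff]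
  apply splitBy_flatten
  · simp only [mem_map, not_exists, not_and]
    intro c hc hfc
    exact (hf_nil c).2 (ne_nil_of_mem_splitBy hc) hfc
  · simp only [mem_map, forall_exists_index, and_imp]
    rintro _ c hc rfl
    have := isChain_of_mem_splitBy hc
    rw [← isChain_map g (R := fun a b => r a b = true)] at this ⊢
    rwa [hf]
  · refine isChain_map f |>.2 <| (isChain_getLast_head_splitBy _ l).imp ?_
    rintro c d ⟨hc, hd, h⟩
    refine ⟨(hf_nil c).2 hc, (hf_nil d).2 hd, ?_⟩
    rwa [getLast_map_eq_of_map_eq (hf c), head_map_eq_of_map_eq (hf d)]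

def revSnd (c : List (α × β)) : List (α × β) := (c.map Prod.fst).zip (c.map Prod.snd).reverse

@[simp] lemma map_fst_revSnd (c : List (α × β)) : (revSnd c).map Prod.fst = c.map Prod.fst :=
  map_fst_zip (by simp)

@[simp] lemma map_snd_revSnd (c : List (α × β)) :
    (revSnd c).map Prod.snd = (c.map Prod.snd).reverse :=
  map_snd_zip (by simp)

lemma revSnd_involutive : Function.Involutive (revSnd (α := α) (β := β)) := fun c => by
  rw [revSnd, map_fst_revSnd, map_snd_revSnd, reverse_reverse, ← unzip_fst, ← unzip_snd,
    zip_unzip]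

end SplitBy

def descChains (rs : List (ℕ × ℕ)) : List (List (ℕ × ℕ)) :=
  rs.splitBy fun p q => decide (q.1 < p.1)

def flipRuns (rs : List (ℕ × ℕ)) : List (ℕ × ℕ) := ((descChains rs).map revSnd).flatten

lemma descChains_flipRuns (rs : List (ℕ × ℕ)) :
    descChains (flipRuns rs) = (descChains rs).map revSnd :=
  splitBy_flatten_map_splitBy (fun a b => decide (b < a)) Prod.fst map_fst_revSnd rs

lemma flipRuns_flipRuns (rs : List (ℕ × ℕ)) : flipRuns (flipRuns rs) = rs := by
  rw [flipRuns, descChains_flipRuns, map_map, revSnd_involutive.comp_self, map_id, descChains,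
    flatten_splitBy]

lemma map_fst_flipRuns (rs : List (ℕ × ℕ)) : (flipRuns rs).map Prod.fst = rs.map Prod.fst := by
  simp only [flipRuns, map_flatten, map_map, Function.comp_def, map_fst_revSnd]
  rw [← map_flatten, descChains, flatten_splitBy]

lemma sum_snd_flipRuns (rs : List (ℕ × ℕ)) :
    ((flipRuns rs).map Prod.snd).sum = (rs.map Prod.snd).sum := by
  have hchain : (sum ∘ map Prod.snd) ∘ revSnd = sum ∘ map (Prod.snd (α := ℕ) (β := ℕ)) :=
    funext fun c => by simp
  rw [flipRuns, map_flatten, sum_flatten, map_map, map_map, hchain, ← map_map, ← sum_flatten,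
    ← map_flatten, descChains, flatten_splitBy]

lemma isRuns_iff_map_fst {rs : List (ℕ × ℕ)} : IsRuns rs ↔ (rs.map Prod.fst).IsChain (· ≠ ·) :=
  (isChain_map Prod.fst).symm

lemma IsRuns.flipRuns {rs : List (ℕ × ℕ)} (h : IsRuns rs) : IsRuns (flipRuns rs) := by
  rwa [isRuns_iff_map_fst, map_fst_flipRuns, ← isRuns_iff_map_fst]

lemma length_ofRuns_flipRuns (rs : List (ℕ × ℕ)) :
    (ofRuns (flipRuns rs)).length = (ofRuns rs).length := by
  rw [length_ofRuns, length_ofRuns, sum_snd_flipRuns, ← length_map (f := Prod.fst),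
    map_fst_flipRuns, length_map]

/-! ### Counting adjacent pairs -/

section CountAdj

variable {α : Type*} (P : α → α → Prop) [DecidableRel P]

def countAdj : List α → ℕ
  | a :: b :: l => (if P a b then 1 else 0) + countAdj (b :: l)
  | _ => 0

@[simp] lemma countAdj_nil : countAdj P [] = 0 := rfl

@[simp] lemma countAdj_singleton (a : α) : countAdj P [a] = 0 := rfl

@[simp] lemma countAdj_cons_cons (a b : α) (l : List α) :
    countAdj P (a :: b :: l) = (if P a b then 1 else 0) + countAdj P (b :: l) := rfl

variable {P}

lemma countAdj_append {c t : List α} (h : ∀ x ∈ c.getLast?, ∀ y ∈ t.head?, ¬ P x y) :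
    countAdj P (c ++ t) = countAdj P c + countAdj P t := by
  induction c with
  | nil => simp
  | cons a c ih =>
    rcases c with _ | ⟨b, c⟩
    · rcases t with _ | ⟨y, t⟩
      · simp
      · simp [h a rfl y rfl]
    · rw [cons_append, cons_append, countAdj_cons_cons, ← cons_append,
        ih fun x hx => h x (by simpa using hx), countAdj_cons_cons, Nat.add_assoc]

lemma countAdj_flatten {L : List (List α)} (hn : [] ∉ L)
    (hL : L.IsChain fun c d => ∀ x ∈ c.getLast?, ∀ y ∈ d.head?, ¬ P x y) :
    countAdj P L.flatten = (L.map (countAdj P)).sum := by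
  induction L with
  | nil => rfl
  | cons c L ih =>
    rw [flatten_cons, countAdj_append, map_cons, sum_cons,
      ih (fun h => hn (mem_cons_of_mem c h)) hL.tail]
    rcases L with _ | ⟨d, L⟩
    · simp
    · have hd : d ≠ [] := fun h => hn (by simp [h])
      rw [flatten_cons, head?_append_of_ne_nil _ hd]
      exact (isChain_cons_cons.1 hL).1

lemma countAdj_eq_sum_splitBy {r : α → α → Bool} (hPr : ∀ a b, P a b → r a b) (l : List α) :
    countAdj P l = ((l.splitBy r).map (countAdj P)).sum := by
  conv_lhs => rw [← flatten_splitBy r l]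
  refine countAdj_flatten (nil_notMem_splitBy r l) <|
    (isChain_getLast_head_splitBy r l).imp fun c d ⟨hc, hd, hcd⟩ x hx y hy hxy => ?_
  rw [getLast?_eq_some_getLast hc, Option.mem_some_iff] at hx
  rw [head?_eq_some_head hd, Option.mem_some_iff] at hy
  subst hx hy
  simp [hPr _ _ hxy] at hcd

variable {R : α → α → Prop} [DecidableRel R] {Q : α → Prop} [DecidablePred Q]

lemma countAdj_and_right_of_isChain {l : List α} (h : l.IsChain R) :
    countAdj (fun a b => R a b ∧ Q b) l = l.tail.countP (Q ·) := by
  induction l with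
  | nil => rfl
  | cons a l ih =>
    rcases l with _ | ⟨b, l⟩
    · rfl
    · obtain ⟨hab, h⟩ := isChain_cons_cons.1 h
      rw [countAdj_cons_cons, ih h]
      by_cases hb : Q b <;> simp [hab, hb, Nat.add_comm]

lemma countAdj_and_left_of_isChain {l : List α} (h : l.IsChain R) :
    countAdj (fun a b => R a b ∧ Q a) l = l.dropLast.countP (Q ·) := by
  induction l with
  | nil => rfl
  | cons a l ih =>
    rcases l with _ | ⟨b, l⟩
    · rfl
    · obtain ⟨hab, h⟩ := isChain_cons_cons.1 h
      rw [countAdj_cons_cons, ih h, dropLast_cons_cons, countP_cons]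
      by_cases ha : Q a <;> simp [hab, ha, Nat.add_comm]

end CountAdj

def runCount211 (rs : List (ℕ × ℕ)) : ℕ := countAdj (fun p q => q.1 < p.1 ∧ 0 < q.2) rs

def runCount221 (rs : List (ℕ × ℕ)) : ℕ := countAdj (fun p q => q.1 < p.1 ∧ 0 < p.2) rs

@[simp] lemma runCount211_nil : runCount211 [] = 0 := rfl

@[simp] lemma runCount221_nil : runCount221 [] = 0 := rfl

@[simp] lemma runCount211_singleton (p : ℕ × ℕ) : runCount211 [p] = 0 := rfl

@[simp] lemma runCount221_singleton (p : ℕ × ℕ) : runCount221 [p] = 0 := rfl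

lemma runCount211_cons_cons (v e w f : ℕ) (rs : List (ℕ × ℕ)) :
    runCount211 ((v, e) :: (w, f) :: rs) =
      (if w < v ∧ 0 < f then 1 else 0) + runCount211 ((w, f) :: rs) := rfl

lemma runCount221_cons_cons (v e w f : ℕ) (rs : List (ℕ × ℕ)) :
    runCount221 ((v, e) :: (w, f) :: rs) =
      (if w < v ∧ 0 < e then 1 else 0) + runCount221 ((w, f) :: rs) := rfl

lemma runCount211_eq_sum (rs : List (ℕ × ℕ)) :
    runCount211 rs = ((descChains rs).map runCount211).sum :=
  countAdj_eq_sum_splitBy (fun _ _ h => decide_eq_true h.1) rs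

lemma runCount221_eq_sum (rs : List (ℕ × ℕ)) :
    runCount221 rs = ((descChains rs).map runCount221).sum :=
  countAdj_eq_sum_splitBy (fun _ _ h => decide_eq_true h.1) rs

lemma isChain_of_mem_descChains {rs c : List (ℕ × ℕ)} (hc : c ∈ descChains rs) :
    c.IsChain fun p q => q.1 < p.1 := by
  simpa using isChain_of_mem_splitBy hc

lemma runCount221_revSnd {c : List (ℕ × ℕ)} (hc : c.IsChain fun p q => q.1 < p.1) :
    runCount221 (revSnd c) = runCount211 c := by
  have hc' : (revSnd c).IsChain fun p q => q.1 < p.1 := by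
    rw [← isChain_map Prod.fst (R := fun a b => b < a)] at hc ⊢
    rwa [map_fst_revSnd]
  rw [runCount221, runCount211, countAdj_and_left_of_isChain hc',
    countAdj_and_right_of_isChain hc]
  have hsnd (l : List (ℕ × ℕ)) :
      l.countP (fun p => 0 < p.2) = (l.map Prod.snd).countP (fun m => 0 < m) := by
    rw [countP_map]; rfl
  rw [hsnd, hsnd, map_dropLast, map_snd_revSnd, dropLast_reverse, countP_reverse, map_tail]

lemma runCount221_flipRuns (rs : List (ℕ × ℕ)) :
    runCount221 (flipRuns rs) = runCount211 rs := by
  rw [runCount221_eq_sum, descChains_flipRuns, map_map, runCount211_eq_sum]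
  exact congrArg sum <| map_congr_left fun c hc =>
    runCount221_revSnd (isChain_of_mem_descChains hc)

/-! ### Occurrences of `211` and `221` in a word given by its runs -/

section OccCount

variable {τ : List ℕ}

lemma lt_length_of_occAt (hτ : τ ≠ []) {l : List ℕ} {i : ℕ} (h : occAt τ l i) : i < l.length := by
  have hlen := h.1
  rw [length_take, length_drop] at hlen
  have := length_pos_iff.2 hτ
  omega

open Classical in
lemma occCount_eq_card_filter (hτ : τ ≠ []) (l : List ℕ) :
    occCount τ l = ((Finset.range l.length).filter (occAt τ l)).card := by
  rw [occCount, ← Nat.card_eq_finsetCard]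
  exact Nat.card_congr <| Equiv.subtypeEquivRight fun i => by
    simpa using fun h => lt_length_of_occAt hτ h

lemma occCount_nil (hτ : τ ≠ []) : occCount τ [] = 0 := by
  simp [occCount_eq_card_filter hτ]

open Classical in
lemma occCount_cons (hτ : τ ≠ []) (a : ℕ) (l : List ℕ) :
    occCount τ (a :: l) = (if occAt τ (a :: l) 0 then 1 else 0) + occCount τ l := by
  have hshift (i : ℕ) : occAt τ (a :: l) (i + 1) ↔ occAt τ l i := by
    rw [occAt, occAt, drop_succ_cons]
  simp only [occCount_eq_card_filter hτ, Finset.card_filter, length_cons,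
    Finset.sum_range_succ', hshift]
  omega

end OccCount

lemma occAt_cons_zero_iff {τ : List ℕ} (hτ : τ.length = 3) (a : ℕ) (l : List ℕ) :
    occAt τ (a :: l) 0 ↔ ∃ b ∈ l.head?, ∃ c ∈ l.tail.head?, OrdIso τ [a, b, c] := by
  rcases l with _ | ⟨b, _ | ⟨c, l⟩⟩ <;> simp [occAt, hτ, OrdIso]

lemma ordIso_211 (a b c : ℕ) : OrdIso [2, 1, 1] [a, b, c] ↔ b < a ∧ b = c := by
  constructor
  · rintro ⟨-, h⟩
    have h10 := (h 1 0 (by norm_num) (by norm_num)).1 (by norm_num)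
    have h12 := h 1 2 (by norm_num) (by norm_num)
    have h21 := h 2 1 (by norm_num) (by norm_num)
    simp only [getD_cons_succ, getD_cons_zero] at h10 h12 h21
    omega
  · rintro ⟨hba, rfl⟩
    refine ⟨rfl, fun j k hj hk => ?_⟩
    simp only [length_cons, length_nil] at hj hk
    interval_cases j <;> interval_cases k <;> simp <;> omega

lemma ordIso_221 (a b c : ℕ) : OrdIso [2, 2, 1] [a, b, c] ↔ a = b ∧ c < b := by
  constructor
  · rintro ⟨-, h⟩
    have h01 := h 0 1 (by norm_num) (by norm_num)
    have h10 := h 1 0 (by norm_num) (by norm_num)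
    have h21 := (h 2 1 (by norm_num) (by norm_num)).1 (by norm_num)
    simp only [getD_cons_succ, getD_cons_zero] at h01 h10 h21
    omega
  · rintro ⟨rfl, hcb⟩
    refine ⟨rfl, fun j k hj hk => ?_⟩
    simp only [length_cons, length_nil] at hj hk
    interval_cases j <;> interval_cases k <;> simp <;> omega

lemma occCount211_replicate_append (v e : ℕ) (s : List ℕ) :
    occCount [2, 1, 1] (replicate (e + 1) v ++ s) = occCount [2, 1, 1] (v :: s) := by
  induction e with
  | zero => rfl
  | succ e ih =>
    rw [replicate_succ, cons_append, occCount_cons (by simp), ih, if_neg, Nat.zero_add]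
    simp [occAt_cons_zero_iff, ordIso_211, replicate_succ]

lemma occCount211_ofRuns {rs : List (ℕ × ℕ)} (h : IsRuns rs) :
    occCount [2, 1, 1] (ofRuns rs) = runCount211 rs := by
  induction rs with
  | nil => exact occCount_nil (by simp)
  | cons p rs ih =>
    obtain ⟨v, e⟩ := p
    rw [ofRuns_cons, occCount211_replicate_append, occCount_cons (by simp), ih h.tail]
    rcases rs with _ | ⟨⟨w, f⟩, rs⟩
    · simp [occAt_cons_zero_iff]
    · have hw : (ofRuns rs).head? ≠ some w := h.tail.head?_ofRuns_ne
      rw [runCount211_cons_cons]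
      congr 1
      rcases f with _ | f <;> simp [occAt_cons_zero_iff, ordIso_211, replicate_succ, hw]

lemma occCount221_ofRuns_cons {v : ℕ} {rs : List (ℕ × ℕ)} (hv : (ofRuns rs).head? ≠ some v)
    (e : ℕ) :
    occCount [2, 2, 1] (ofRuns ((v, e) :: rs)) =
      (if 0 < e ∧ ∃ w ∈ rs.head?.map Prod.fst, w < v then 1 else 0) +
        occCount [2, 2, 1] (ofRuns rs) := by
  induction e with
  | zero =>
    rw [ofRuns_cons, zero_add, replicate_one, singleton_append, occCount_cons (by simp)]
    simp [occAt_cons_zero_iff, ordIso_221, hv]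
  | succ e ih =>
    rw [ofRuns_cons_succ, occCount_cons (by simp), ih]
    rcases e with _ | e
    · simp [occAt_cons_zero_iff, ordIso_221, ← head?_ofRuns]
    · rw [if_neg (by simp [occAt_cons_zero_iff, ordIso_221, replicate_succ])]
      simp only [Nat.add_one_pos, true_and, zero_add]

lemma occCount221_ofRuns {rs : List (ℕ × ℕ)} (h : IsRuns rs) :
    occCount [2, 2, 1] (ofRuns rs) = runCount221 rs := by
  induction rs with
  | nil => exact occCount_nil (by simp)
  | cons p rs ih =>
    obtain ⟨v, e⟩ := p
    rw [occCount221_ofRuns_cons h.head?_ofRuns_ne, ih h.tail]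
    rcases rs with _ | ⟨⟨w, f⟩, rs⟩
    · simp
    · simp [runCount221_cons_cons, and_comm]

/-! ### Non-crossing partitions only see the sequence of run values -/

def RGSFrom : ℕ → List ℕ → Prop
  | _, [] => True
  | m, a :: l => 1 ≤ a ∧ a ≤ m + 1 ∧ RGSFrom (max m a) l

@[simp] lemma rgsFrom_nil (m : ℕ) : RGSFrom m [] := trivial

@[simp] lemma rgsFrom_cons (m a : ℕ) (l : List ℕ) :
    RGSFrom m (a :: l) ↔ 1 ≤ a ∧ a ≤ m + 1 ∧ RGSFrom (max m a) l := Iff.rfl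

lemma foldr_max_max (a m : ℕ) (l : List ℕ) : l.foldr max (max m a) = max a (l.foldr max m) := by
  induction l with
  | nil => exact max_comm m a
  | cons x l ih => simp only [foldr_cons, ih]; omega

lemma rgsFrom_iff (l : List ℕ) (m : ℕ) : RGSFrom m l ↔
    (∀ x ∈ l, 1 ≤ x) ∧ ∀ i < l.length, l.getD i 0 ≤ (l.take i).foldr max m + 1 := by
  induction l generalizing m with
  | nil => simp
  | cons a l ih =>
    simp only [rgsFrom_cons, ih, forall_mem_cons, length_cons]
    constructor
    · rintro ⟨ha, ham, hl, hi⟩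
      refine ⟨⟨ha, hl⟩, fun i hi' => ?_⟩
      rcases i with _ | i
      · simpa using ham
      · have := hi i (by omega)
        simp only [getD_cons_succ, take_succ_cons, foldr_cons]
        rw [foldr_max_max] at this
        omega
    · rintro ⟨⟨ha, hl⟩, hi⟩
      refine ⟨ha, by simpa using hi 0 (by omega), hl, fun i hi' => ?_⟩
      have := hi (i + 1) (by omega)
      simp only [getD_cons_succ, take_succ_cons, foldr_cons] at this
      rw [foldr_max_max]
      omega

lemma isRGS_iff_rgsFrom (l : List ℕ) : IsRGS l ↔ RGSFrom 0 l := by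
  rw [rgsFrom_iff]
  rcases l with _ | ⟨a, l⟩
  · simp [IsRGS]
  · simp only [IsRGS, getD_cons_zero, forall_mem_cons, length_cons]
    constructor
    · rintro ⟨rfl, hl, hi⟩
      exact ⟨hl, fun i hi' => by rcases i with _ | i <;> simp_all⟩
    · rintro ⟨⟨ha, hl⟩, hi⟩
      have := hi 0 (by omega)
      simp only [getD_cons_zero, take_zero, foldr_nil] at this
      exact ⟨by omega, ⟨ha, hl⟩, fun i hi' => hi (i + 1) hi'⟩

lemma rgsFrom_replicate_append (m v e : ℕ) (l : List ℕ) :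
    RGSFrom m (replicate (e + 1) v ++ l) ↔ RGSFrom m (v :: l) := by
  induction e generalizing m with
  | zero => rfl
  | succ e ih =>
    rw [replicate_succ, cons_append, rgsFrom_cons, ih, rgsFrom_cons, rgsFrom_cons, max_assoc,
      max_self]
    constructor
    · exact fun ⟨h1, h2, _, _, h⟩ => ⟨h1, h2, h⟩
    · exact fun ⟨h1, h2, h⟩ => ⟨h1, h2, h1, by omega, h⟩

lemma rgsFrom_ofRuns (m : ℕ) (rs : List (ℕ × ℕ)) :
    RGSFrom m (ofRuns rs) ↔ RGSFrom m (rs.map Prod.fst) := by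
  induction rs generalizing m with
  | nil => rfl
  | cons p rs ih =>
    obtain ⟨v, e⟩ := p
    simp only [ofRuns_cons, rgsFrom_replicate_append, map_cons, rgsFrom_cons, ih]

lemma crossing_iff_sublist (l : List ℕ) :
    Crossing l ↔ ∃ a b, a < b ∧ [a, b, a, b] <+ l := by
  constructor
  · rintro ⟨i, j, k, m, hij, hjk, hkm, hm, hik, hjm, hlt⟩
    simp only [getD_eq_getElem?_getD, getElem?_eq_getElem hm,
      getElem?_eq_getElem (show i < l.length by omega),
      getElem?_eq_getElem (show j < l.length by omega),
      getElem?_eq_getElem (show k < l.length by omega), Option.getD_some] at hik hjm hlt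
    have hsub : [l[i], l[j], l[k], l[m]] <+ l := by
      simpa using map_getElem_sublist
        (is := [⟨i, by omega⟩, ⟨j, by omega⟩, ⟨k, by omega⟩, ⟨m, hm⟩]) (by simp; omega)
    rw [← hik, ← hjm] at hsub
    exact ⟨_, _, hlt, hsub⟩
  · rintro ⟨a, b, hab, hsub⟩
    obtain ⟨is, his, hpw⟩ := sublist_eq_map_getElem hsub
    rcases is with _ | ⟨i0, _ | ⟨i1, _ | ⟨i2, _ | ⟨i3, _ | _⟩⟩⟩⟩ <;> simp at his
    obtain ⟨h0, h1, h2, h3⟩ := his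
    simp only [pairwise_cons, mem_cons, forall_eq_or_imp] at hpw
    refine ⟨i0, i1, i2, i3, by omega, by omega, by omega, i3.isLt, ?_, ?_, ?_⟩ <;>
      simp [← h0, ← h1, ← h2, ← h3, hab]

lemma map_fst_sublist_ofRuns (rs : List (ℕ × ℕ)) : rs.map Prod.fst <+ ofRuns rs := by
  induction rs with
  | nil => simp
  | cons p rs ih =>
    obtain ⟨v, e⟩ := p
    simpa [replicate_succ] using (ih.trans (sublist_append_right (replicate e v) _)).cons_cons v

lemma sublist_map_fst_of_sublist_ofRuns {p : List ℕ} (hp : p.IsChain (· ≠ ·))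
    {rs : List (ℕ × ℕ)} (hsub : p <+ ofRuns rs) : p <+ rs.map Prod.fst := by
  induction rs generalizing p with
  | nil => simpa using hsub
  | cons r rs ih =>
    obtain ⟨v, e⟩ := r
    obtain ⟨p₁, p₂, rfl, hp₁, hp₂⟩ := sublist_append_iff.1 hsub
    obtain ⟨k, -, rfl⟩ := sublist_replicate_iff.1 hp₁
    have hp₂' := ih (isChain_append.1 hp).2.1 hp₂
    match k, hp with
    | 0, _ => exact hp₂'.trans (sublist_cons_self _ _)
    | 1, _ => exact hp₂'.cons_cons v
    | k + 2, hp => simp [replicate_succ, isChain_cons_cons] at hp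

lemma crossing_ofRuns_iff (rs : List (ℕ × ℕ)) :
    Crossing (ofRuns rs) ↔ Crossing (rs.map Prod.fst) := by
  simp only [crossing_iff_sublist]
  constructor
  · rintro ⟨a, b, hab, hsub⟩
    refine ⟨a, b, hab, sublist_map_fst_of_sublist_ofRuns ?_ hsub⟩
    simp [isChain_cons_cons]
    omega
  · rintro ⟨a, b, hab, hsub⟩
    exact ⟨a, b, hab, hsub.trans (map_fst_sublist_ofRuns rs)⟩

lemma ncseq_ofRuns_iff_of_map_fst_eq {n : ℕ} {rs rs' : List (ℕ × ℕ)}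
    (hfst : rs.map Prod.fst = rs'.map Prod.fst) (hlen : (ofRuns rs).length = (ofRuns rs').length) :
    NCseq n (ofRuns rs) ↔ NCseq n (ofRuns rs') := by
  rw [NCseq, NCseq, hlen, isRGS_iff_rgsFrom, isRGS_iff_rgsFrom, rgsFrom_ofRuns, rgsFrom_ofRuns,
    crossing_ofRuns_iff, crossing_ofRuns_iff, hfst]

/-! ### The involution -/

def flipWord (l : List ℕ) : List ℕ := ofRuns (flipRuns (toRuns l))

lemma flipWord_involutive : Function.Involutive flipWord := fun l => by
  rw [flipWord, flipWord, toRuns_ofRuns (isRuns_toRuns l).flipRuns, flipRuns_flipRuns,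
    ofRuns_toRuns]

lemma ncseq_flipWord_iff {n : ℕ} {l : List ℕ} : NCseq n (flipWord l) ↔ NCseq n l := by
  conv_rhs => rw [← ofRuns_toRuns l]
  exact ncseq_ofRuns_iff_of_map_fst_eq (map_fst_flipRuns _) (length_ofRuns_flipRuns _)

lemma occCount221_flipWord (l : List ℕ) :
    occCount [2, 2, 1] (flipWord l) = occCount [2, 1, 1] l := by
  conv_rhs => rw [← ofRuns_toRuns l]
  rw [flipWord, occCount221_ofRuns (isRuns_toRuns l).flipRuns, runCount221_flipRuns,
    occCount211_ofRuns (isRuns_toRuns l)]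

end NCSubword

/-- The subwords 211 and 221 are equidistributed on NC_n. -/
theorem stmt8 (n k : ℕ) :
    Nat.card {l : List ℕ // NCseq n l ∧ occCount [2, 1, 1] l = k} =
      Nat.card {l : List ℕ // NCseq n l ∧ occCount [2, 2, 1] l = k} :=
  Nat.card_congr <| (NCSubword.flipWord_involutive.toPerm _).subtypeEquiv fun l => by
    rw [Function.Involutive.coe_toPerm, NCSubword.ncseq_flipWord_iff,
      NCSubword.occCount221_flipWord]
end

section
/- For all n ≥ 0 and k ≥ 0, the number of non-crossing partitions of [n] with exactly k occurrences of the subword 1121 equals the number with exactly k occurrences of 1211, which also equals the number with exactly k occurrences of 1221 and the number with exactly k occurrences of 1231. -/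
namespace List

/-! ### Swapping two overlap-free words -/

section SwapWords

variable {α : Type*} (u v : List α)

noncomputable def infixCount (w s : List α) : ℕ := Nat.card {p : ℕ // w <+: s.drop p}

structure OverlapFree : Prop where
  length_eq : u.length = v.length
  ne_nil : u ≠ []
  ne : u ≠ v
  not_prefix : ∀ w ∈ [u, v], ∀ w' ∈ [u, v], ∀ p < w.length, 0 < p → ¬ w.drop p <+: w'

variable {u v}

lemma prefix_append_iff_eq {w w' x : List α} (h : w'.length = w.length) :
    w' <+: w ++ x ↔ w' = w :=
  ⟨fun hp => (prefix_of_prefix_length_le hp (prefix_append w x) h.le).eq_of_length h,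
    fun he => he ▸ prefix_append w x⟩

namespace OverlapFree

variable (h : OverlapFree u v)
include h

lemma v_ne_nil : v ≠ [] :=
  length_pos_iff.1 (h.length_eq ▸ length_pos_iff.2 h.ne_nil)

lemma symm : OverlapFree v u where
  length_eq := h.length_eq.symm
  ne_nil := h.v_ne_nil
  ne := h.ne.symm
  not_prefix w hw w' hw' := h.not_prefix w (by simp at hw ⊢; tauto) w' (by simp at hw' ⊢; tauto)

lemma length_of_mem {w : List α} (hw : w ∈ [u, v]) : w.length = u.length := by
  simp only [mem_cons, not_mem_nil, or_false] at hw
  rcases hw with rfl | rfl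
  · rfl
  · exact h.length_eq.symm

lemma length_lt_of_append_eq {t s : List α} (ht : u ++ t = s) : t.length < s.length := by
  rw [← ht, length_append]
  have := length_pos_iff.2 h.ne_nil
  omega

lemma prefix_drop_append_iff_of_lt {w w' : List α} (hw : w ∈ [u, v]) (hw' : w' ∈ [u, v])
    {p : ℕ} (hp : p < w.length) (x : List α) : w' <+: (w ++ x).drop p ↔ p = 0 ∧ w' = w := by
  rcases Nat.eq_zero_or_pos p with rfl | hp₀
  · simp only [drop_zero, true_and]
    exact prefix_append_iff_eq (by rw [h.length_of_mem hw, h.length_of_mem hw'])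
  refine iff_of_false (fun hpre => ?_) (by omega)
  rw [drop_append_of_le_length hp.le] at hpre
  refine h.not_prefix w hw w' hw' p hp hp₀ (prefix_of_prefix_length_le (prefix_append _ x) hpre ?_)
  rw [length_drop, h.length_of_mem hw, h.length_of_mem hw']
  omega

end OverlapFree

variable [DecidableEq α] (u v)

def swapWords : List α → List α
  | [] => []
  | a :: s =>
    if u <+: a :: s then v ++ swapWords (s.drop (u.length - 1))
    else if v <+: a :: s then u ++ swapWords (s.drop (v.length - 1))
    else a :: swapWords s
termination_by s => s.length

variable {u v}

@[simp] lemma swapWords_nil : swapWords u v [] = [] := by rw [swapWords]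

lemma swapWords_append_left (hu : u ≠ []) (t : List α) :
    swapWords u v (u ++ t) = v ++ swapWords u v t := by
  obtain ⟨b, u', rfl⟩ := exists_cons_of_ne_nil hu
  rw [cons_append, swapWords, if_pos (by simp)]
  simp

lemma swapWords_cons {a : α} {s : List α} (hu : ¬ u <+: a :: s) (hv : ¬ v <+: a :: s) :
    swapWords u v (a :: s) = a :: swapWords u v s := by
  rw [swapWords, if_neg hu, if_neg hv]

namespace OverlapFree

variable (h : OverlapFree u v)
include h

lemma swapWords_append_right (t : List α) : swapWords u v (v ++ t) = u ++ swapWords u v t := by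
  have hu : ¬ u <+: v ++ t := fun hp => h.ne ((prefix_append_iff_eq h.length_eq).1 hp)
  obtain ⟨b, v', rfl⟩ := exists_cons_of_ne_nil h.v_ne_nil
  rw [cons_append] at hu ⊢
  rw [swapWords, if_neg hu, if_pos (by simp)]
  simp

theorem induction_on {P : List α → Prop} (s : List α) (nil : P [])
    (left : ∀ t, P t → P (u ++ t)) (right : ∀ t, P t → P (v ++ t))
    (cons : ∀ a s, ¬ u <+: a :: s → ¬ v <+: a :: s → P s → P (a :: s)) : P s := by
  obtain ⟨n, hn⟩ : ∃ n, s.length = n := ⟨_, rfl⟩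
  induction n using Nat.strong_induction_on generalizing s with
  | _ n ih =>
  rcases s with _ | ⟨a, s⟩
  · exact nil
  by_cases hu : u <+: a :: s
  · obtain ⟨t, ht⟩ := hu
    exact ht ▸ left t (ih _ (hn ▸ h.length_lt_of_append_eq ht) t rfl)
  by_cases hv : v <+: a :: s
  · obtain ⟨t, ht⟩ := hv
    exact ht ▸ right t (ih _ (hn ▸ h.symm.length_lt_of_append_eq ht) t rfl)
  exact cons a s hu hv (ih _ (by simp at hn; omega) s rfl)

lemma prefix_or_swapWords_eq (s : List α) :
    (∃ w ∈ [u, v], w <+: swapWords u v s) ∨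
      swapWords u v s = s.take 1 ++ swapWords u v (s.drop 1) := by
  rcases s with _ | ⟨a, s⟩
  · simp
  by_cases hu : u <+: a :: s
  · obtain ⟨t, ht⟩ := hu
    rw [← ht, swapWords_append_left h.ne_nil]
    exact Or.inl ⟨v, by simp, prefix_append _ _⟩
  by_cases hv : v <+: a :: s
  · obtain ⟨t, ht⟩ := hv
    rw [← ht, h.swapWords_append_right]
    exact Or.inl ⟨u, by simp, prefix_append _ _⟩
  · exact Or.inr (by rw [swapWords_cons hu hv]; rfl)

/-- A short word none of whose suffixes starts `u` or `v` cannot meet an exchanged block, so it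
reads the same letters before and after the exchange. -/
lemma prefix_of_prefix_swapWords {x : List α} (hx : x.length ≤ u.length)
    (hx' : ∀ p < x.length, ∀ w ∈ [u, v], ¬ x.drop p <+: w) {s : List α}
    (hs : x <+: swapWords u v s) : x <+: s := by
  induction x generalizing s with
  | nil => exact nil_prefix
  | cons b x ih =>
    rcases h.prefix_or_swapWords_eq s with ⟨w, hw, hws⟩ | hs'
    · refine absurd (prefix_of_prefix_length_le hs hws ?_) (hx' 0 (by simp) w hw)
      rw [h.length_of_mem hw]; exact hx
    rcases s with _ | ⟨a, s⟩
    · simp at hs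
    rw [hs', take_one, drop_one, head?_cons, Option.toList_some, tail_cons, singleton_append,
      cons_prefix_cons] at hs
    refine cons_prefix_cons.2 ⟨hs.1, ih (by simp at hx; omega) (fun p hp w hw => ?_) hs.2⟩
    simpa using hx' (p + 1) (by simp; omega) w hw

lemma prefix_cons_of_prefix_cons_swapWords {w : List α} (hw : w ∈ [u, v]) {a : α}
    {s : List α} (hs : w <+: a :: swapWords u v s) : w <+: a :: s := by
  obtain ⟨b, w', rfl⟩ := exists_cons_of_ne_nil (length_pos_iff.1
    (h.length_of_mem hw ▸ length_pos_iff.2 h.ne_nil))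
  rw [cons_prefix_cons] at hs ⊢
  refine ⟨hs.1, h.prefix_of_prefix_swapWords ?_ (fun p hp w'' hw'' => ?_) hs.2⟩
  · rw [← h.length_of_mem hw]; simp
  · exact h.not_prefix _ hw w'' hw'' (p + 1) (by simp; omega) (by omega)

theorem swapWords_swapWords (s : List α) : swapWords u v (swapWords u v s) = s := by
  induction s using h.induction_on with
  | nil => simp
  | left t ih => rw [swapWords_append_left h.ne_nil, h.swapWords_append_right, ih]
  | right t ih => rw [h.swapWords_append_right, swapWords_append_left h.ne_nil, ih]
  | cons a s hu hv ih =>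
    rw [swapWords_cons hu hv,
      swapWords_cons (mt (h.prefix_cons_of_prefix_cons_swapWords (by simp)) hu)
        (mt (h.prefix_cons_of_prefix_cons_swapWords (by simp)) hv), ih]

theorem length_swapWords (s : List α) : (swapWords u v s).length = s.length := by
  induction s using h.induction_on with
  | nil => simp
  | left t ih => rw [swapWords_append_left h.ne_nil, length_append, length_append, h.length_eq, ih]
  | right t ih => rw [h.swapWords_append_right, length_append, length_append, h.length_eq, ih]
  | cons a s hu hv ih => rw [swapWords_cons hu hv, length_cons, length_cons, ih]

theorem prefix_drop_swapWords_iff (s : List α) (p : ℕ) :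
    u <+: (swapWords u v s).drop p ↔ v <+: s.drop p := by
  induction s using h.induction_on generalizing p with
  | nil => simp [h.ne_nil, h.v_ne_nil]
  | left t ih =>
    rw [swapWords_append_left h.ne_nil]
    rcases lt_or_ge p v.length with hp | hp
    · rw [h.prefix_drop_append_iff_of_lt (by simp) (by simp) hp,
        h.prefix_drop_append_iff_of_lt (by simp) (by simp) (h.length_eq ▸ hp), @eq_comm _ v]
    · obtain ⟨q, rfl⟩ := Nat.exists_eq_add_of_le hp
      rw [drop_length_add_append, ← h.length_eq, drop_length_add_append, ih]
  | right t ih =>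
    rw [h.swapWords_append_right]
    rcases lt_or_ge p u.length with hp | hp
    · rw [h.prefix_drop_append_iff_of_lt (by simp) (by simp) hp,
        h.prefix_drop_append_iff_of_lt (by simp) (by simp) (h.length_eq ▸ hp)]
      simp only [and_true]
    · obtain ⟨q, rfl⟩ := Nat.exists_eq_add_of_le hp
      rw [drop_length_add_append, h.length_eq, drop_length_add_append, ih]
  | cons a s hu hv ih =>
    rw [swapWords_cons hu hv]
    cases p with
    | zero => exact iff_of_false (mt (h.prefix_cons_of_prefix_cons_swapWords (by simp)) hu) hv
    | succ q => exact ih q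

theorem infixCount_swapWords (s : List α) : infixCount u (swapWords u v s) = infixCount v s :=
  Nat.card_congr (Equiv.subtypeEquivRight fun p => h.prefix_drop_swapWords_iff s p)

end OverlapFree

end SwapWords

end List

namespace NoncrossingRGS

/-! ### Restricted growth sequences and crossings -/

section Sequences

variable {q : List ℕ} {x : ℕ}

lemma getD_mem_of_lt {l : List ℕ} {i : ℕ} (hi : i < l.length) : l.getD i 0 ∈ l := by
  rw [List.getD_eq_getElem _ _ hi]; exact List.getElem_mem hi

lemma getD_append_singleton_length : (q ++ [x]).getD q.length 0 = x := by simp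

lemma getD_append_singleton_of_lt {i : ℕ} (hi : i < q.length) :
    (q ++ [x]).getD i 0 = q.getD i 0 := List.getD_append _ _ _ _ hi

lemma getD_le_foldr_max {i : ℕ} (hi : i < q.length) : q.getD i 0 ≤ q.foldr max 0 :=
  List.le_max_of_le' 0 (getD_mem_of_lt hi) le_rfl

lemma exists_mem_le_of_le_foldr_max {u : ℕ} (hu : 0 < u) (h : u ≤ q.foldr max 0) :
    ∃ y ∈ q, u ≤ y := by
  by_contra! hlt
  have := List.max_le_of_forall_le q (u - 1) fun y hy => Nat.le_sub_one_of_lt (hlt y hy)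
  exact absurd (h.trans this) (by omega)

lemma foldr_max_append_singleton (q : List ℕ) (x : ℕ) :
    (q ++ [x]).foldr max 0 = max (q.foldr max 0) x := by
  induction q with
  | nil => simp
  | cons a q ih => simp only [List.cons_append, List.foldr_cons, ih]; omega

lemma isRGS_append_singleton_iff :
    IsRGS (q ++ [x]) ↔ IsRGS q ∧ 1 ≤ x ∧ x ≤ q.foldr max 0 + 1 := by
  rcases eq_or_ne q [] with rfl | hq
  · simp [IsRGS]; omega
  have hhead : (q ++ [x]).getD 0 1 = q.getD 0 1 := by cases q <;> simp_all
  have hstep : ∀ i, i + 1 < q.length →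
      ((q ++ [x]).getD (i + 1) 0 ≤ ((q ++ [x]).take (i + 1)).foldr max 0 + 1 ↔
        q.getD (i + 1) 0 ≤ (q.take (i + 1)).foldr max 0 + 1) := fun i hi => by
    rw [getD_append_singleton_of_lt hi, List.take_append_of_le_length hi.le]
  have hlast : (q ++ [x]).getD q.length 0 ≤ ((q ++ [x]).take q.length).foldr max 0 + 1 ↔
      x ≤ q.foldr max 0 + 1 := by
    rw [getD_append_singleton_length, List.take_left' rfl]
  obtain ⟨n, hn⟩ : ∃ n, q.length = n + 1 := Nat.exists_eq_succ_of_ne_zero (by simpa using hq)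
  simp only [IsRGS, hhead, List.mem_append, List.mem_singleton, List.length_append,
    List.length_singleton]
  constructor
  · rintro ⟨h0, hpos, hle⟩
    refine ⟨⟨h0, fun y hy => hpos y (Or.inl hy), fun i hi => (hstep i hi).1 (hle i (by omega))⟩,
      hpos x (Or.inr rfl), hlast.1 (hn ▸ hle n (by omega))⟩
  · rintro ⟨⟨h0, hpos, hle⟩, hx, hxle⟩
    refine ⟨h0, fun y hy => hy.elim (hpos y) (· ▸ hx), fun i hi => ?_⟩
    rcases Nat.lt_succ_iff_lt_or_eq.1 (show i + 1 < q.length + 1 from hi) with hi | hi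
    · exact (hstep i hi).2 (hle i hi)
    · rw [hi]; exact hlast.2 hxle

lemma _root_.IsRGS.of_append {r : List ℕ} (h : IsRGS (q ++ r)) : IsRGS q := by
  induction r using List.reverseRecOn with
  | nil => simpa using h
  | append_singleton r y ih =>
    rw [← List.append_assoc, isRGS_append_singleton_iff] at h
    exact ih h.1

lemma _root_.IsRGS.exists_lt_getD_eq {L : List ℕ} (hL : IsRGS L) :
    ∀ i, i < L.length → ∀ u, 1 ≤ u → u < L.getD i 0 → ∃ r < i, L.getD r 0 = u := by
  intro i
  induction i using Nat.strong_induction_on with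
  | _ i ih =>
  intro hi u hu hlt
  rcases i with _ | i
  · have : L.getD 0 0 = 1 := by have := hL.1; cases L <;> simp_all
    omega
  obtain ⟨y, hy, huy⟩ := exists_mem_le_of_le_foldr_max hu
    (Nat.le_of_lt_succ (hlt.trans_le (hL.2.2 i hi)))
  obtain ⟨r, hr, rfl⟩ := List.mem_iff_getElem.1 hy
  have hr' : r < i + 1 := by simp at hr; omega
  have hLr : (L.take (i + 1))[r] = L.getD r 0 := by
    simp [List.getD_eq_getElem?_getD, List.getElem?_eq_getElem (by omega : r < L.length)]
  rw [hLr] at huy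
  rcases huy.lt_or_eq with huy | huy
  · obtain ⟨r', hr', h⟩ := ih r hr' (by omega) u hu huy
    exact ⟨r', by omega, h⟩
  · exact ⟨r, hr', huy.symm⟩

lemma _root_.Crossing.append {r : List ℕ} (h : Crossing q) : Crossing (q ++ r) := by
  obtain ⟨i, j, k, m, hij, hjk, hkm, hm, hik, hjm, hlt⟩ := h
  refine ⟨i, j, k, m, hij, hjk, hkm, by simp; omega, ?_⟩
  simp only [List.getD_append _ _ _ _ (by omega : i < q.length),
    List.getD_append _ _ _ _ (by omega : j < q.length),
    List.getD_append _ _ _ _ (by omega : k < q.length), List.getD_append _ _ _ _ hm]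
  exact ⟨hik, hjm, hlt⟩

lemma not_crossing_append_singleton (hq : ¬ Crossing q)
    (h : ∀ i j k, i < j → j < k → k < q.length → q.getD j 0 = x →
      q.getD i 0 = q.getD k 0 → x ≤ q.getD i 0) :
    ¬ Crossing (q ++ [x]) := by
  rintro ⟨i, j, k, m, hij, hjk, hkm, hm, hik, hjm, hlt⟩
  simp only [List.length_append, List.length_singleton] at hm
  simp only [getD_append_singleton_of_lt (by omega : i < q.length),
    getD_append_singleton_of_lt (by omega : j < q.length),
    getD_append_singleton_of_lt (by omega : k < q.length)] at hik hjm hlt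
  rcases Nat.lt_succ_iff_lt_or_eq.1 hm with hm | rfl
  · rw [getD_append_singleton_of_lt hm] at hjm
    exact hq ⟨i, j, k, m, hij, hjk, hkm, hm, hik, hjm, hlt⟩
  · rw [getD_append_singleton_length] at hjm
    exact absurd (h i j k hij hjk hkm hjm hik) (by omega)

lemma ordIso_1121_iff {a b c d : ℕ} :
    OrdIso [1, 1, 2, 1] [a, b, c, d] ↔ b = a ∧ a < c ∧ d = a := by
  refine ⟨fun ⟨_, h⟩ => ?_, fun h => ⟨rfl, fun j k hj hk => ?_⟩⟩
  · have := h 0 1; have := h 1 0; have := h 1 2; have := h 2 1; have := h 0 2; have := h 2 0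
    have := h 0 3; have := h 3 0
    simp_all
    omega
  · simp only [List.length_cons, List.length_nil] at hj hk
    interval_cases j <;> interval_cases k <;> simp <;> omega

lemma ordIso_1211_iff {a b c d : ℕ} :
    OrdIso [1, 2, 1, 1] [a, b, c, d] ↔ a < b ∧ c = a ∧ d = a := by
  refine ⟨fun ⟨_, h⟩ => ?_, fun h => ⟨rfl, fun j k hj hk => ?_⟩⟩
  · have := h 0 1; have := h 1 0; have := h 1 2; have := h 2 1; have := h 0 2; have := h 2 0
    have := h 0 3; have := h 3 0
    simp_all
    omega
  · simp only [List.length_cons, List.length_nil] at hj hk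
    interval_cases j <;> interval_cases k <;> simp <;> omega

lemma ordIso_1221_iff {a b c d : ℕ} :
    OrdIso [1, 2, 2, 1] [a, b, c, d] ↔ a < b ∧ c = b ∧ d = a := by
  refine ⟨fun ⟨_, h⟩ => ?_, fun h => ⟨rfl, fun j k hj hk => ?_⟩⟩
  · have := h 0 1; have := h 1 0; have := h 1 2; have := h 2 1; have := h 0 2; have := h 2 0
    have := h 0 3; have := h 3 0
    simp_all
    omega
  · simp only [List.length_cons, List.length_nil] at hj hk
    interval_cases j <;> interval_cases k <;> simp <;> omega

lemma ordIso_1231_iff {a b c d : ℕ} :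
    OrdIso [1, 2, 3, 1] [a, b, c, d] ↔ a < b ∧ b < c ∧ d = a := by
  refine ⟨fun ⟨_, h⟩ => ?_, fun h => ⟨rfl, fun j k hj hk => ?_⟩⟩
  · have := h 0 1; have := h 1 0; have := h 1 2; have := h 2 1; have := h 0 2; have := h 2 0
    have := h 0 3; have := h 3 0
    simp_all
    omega
  · simp only [List.length_cons, List.length_nil] at hj hk
    interval_cases j <;> interval_cases k <;> simp <;> omega

end Sequences

/-! ### The stack machine -/

structure State where
  stack : List ℕ
  count : ℕ

namespace State

def start : State := ⟨[], 0⟩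

def step (S : State) : ℕ → State
  | 0 => ⟨(S.count + 1) :: S.stack, S.count + 1⟩
  | j + 1 => ⟨S.stack.drop j, S.count⟩

def letter (S : State) : ℕ → ℕ
  | 0 => S.count + 1
  | j + 1 => S.stack.getD j 0

def run (S : State) (ms : List ℕ) : State := ms.foldl step S

def decode (S : State) : List ℕ → List ℕ
  | [] => []
  | m :: ms => S.letter m :: (S.step m).decode ms

structure WF (S : State) : Prop where
  sorted : S.stack.Pairwise (· > ·)
  le_count : ∀ x ∈ S.stack, x ≤ S.count

variable {S : State} {m m' j : ℕ}

@[simp] lemma step_zero : S.step 0 = ⟨(S.count + 1) :: S.stack, S.count + 1⟩ := rfl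
@[simp] lemma step_succ (j : ℕ) : S.step (j + 1) = ⟨S.stack.drop j, S.count⟩ := rfl
@[simp] lemma letter_zero : S.letter 0 = S.count + 1 := rfl
@[simp] lemma letter_succ (j : ℕ) : S.letter (j + 1) = S.stack.getD j 0 := rfl

lemma length_stack_step (h : m ≤ S.stack.length) :
    (S.step m).stack.length = S.stack.length + 1 - m := by
  cases m <;> simp

lemma stack_step_ne_nil (h : m ≤ S.stack.length) : (S.step m).stack ≠ [] := by
  rw [← List.length_pos_iff, length_stack_step h]; omega

lemma headD_stack_step (S : State) (m : ℕ) : (S.step m).stack.headD 0 = S.letter m := by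
  cases m <;> simp [List.headD_eq_head?_getD, List.head?_drop]

lemma headD_eq_letter_one (S : State) : S.stack.headD 0 = S.letter 1 := by
  rw [letter_succ]; cases S.stack <;> rfl

lemma length_decode (S : State) (ms : List ℕ) : (S.decode ms).length = ms.length := by
  induction ms generalizing S with
  | nil => rfl
  | cons m ms ih => simp [decode, ih]

lemma drop_decode (S : State) (ms : List ℕ) (p : ℕ) :
    (S.decode ms).drop p = (S.run (ms.take p)).decode (ms.drop p) := by
  induction ms generalizing S p with
  | nil => simp [decode]
  | cons m ms ih => cases p <;> simp [decode, run, ih]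

lemma take_decode (S : State) (ms : List ℕ) (p : ℕ) :
    (S.decode ms).take p = S.decode (ms.take p) := by
  induction ms generalizing S p with
  | nil => simp [decode]
  | cons m ms ih => cases p <;> simp [decode, ih]

lemma WF.start : State.start.WF := ⟨List.Pairwise.nil, by simp [State.start]⟩

lemma WF.step (hS : S.WF) (m : ℕ) : (S.step m).WF := by
  cases m with
  | zero =>
    refine ⟨List.pairwise_cons.2 ⟨fun x hx => ?_, hS.sorted⟩, fun x hx => ?_⟩
    · exact Nat.lt_succ_of_le (hS.le_count x hx)
    · rcases List.mem_cons.1 hx with rfl | hx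
      · rfl
      · exact (hS.le_count x hx).trans (Nat.le_succ _)
  | succ j =>
    exact ⟨hS.sorted.sublist (List.drop_sublist _ _),
      fun x hx => hS.le_count x (List.mem_of_mem_drop hx)⟩

lemma WF.run (hS : S.WF) (ms : List ℕ) : (S.run ms).WF := by
  induction ms generalizing S with
  | nil => exact hS
  | cons m ms ih => exact ih (hS.step m)

lemma WF.lt_of_mem_take (hS : S.WF) (hj : j < S.stack.length) {v : ℕ}
    (hv : v ∈ S.stack.take j) : S.stack.getD j 0 < v := by
  have hsplit := hS.sorted
  rw [← List.take_append_drop j S.stack, List.pairwise_append] at hsplit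
  refine hsplit.2.2 v hv _ ?_
  rw [List.getD_eq_getElem _ _ hj, List.drop_eq_getElem_cons hj]
  exact List.mem_cons_self

lemma WF.le_of_mem_drop (hS : S.WF) (hj : j < S.stack.length) {v : ℕ}
    (hv : v ∈ S.stack.drop j) : v ≤ S.stack.getD j 0 := by
  have hsplit := hS.sorted
  rw [← List.take_append_drop (j + 1) S.stack, List.pairwise_append] at hsplit
  rw [List.drop_eq_getElem_cons hj, List.mem_cons] at hv
  rw [List.getD_eq_getElem _ _ hj]
  rcases hv with rfl | hv
  · exact le_rfl
  · exact (hsplit.2.2 _ (List.mem_take_iff_getElem.2 ⟨j, by simp [hj], rfl⟩) v hv).le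

lemma WF.letter_eq_letter_iff (hS : S.WF) (hm : m ≤ S.stack.length)
    (hm' : m' ≤ S.stack.length) : S.letter m = S.letter m' ↔ m = m' := by
  refine ⟨fun h => ?_, congrArg _⟩
  have hne : ∀ j, j < S.stack.length → S.stack.getD j 0 ≠ S.count + 1 := fun j hj =>
    (Nat.lt_succ_of_le (hS.le_count _ (getD_mem_of_lt hj))).ne
  match m, m' with
  | 0, 0 => rfl
  | 0, j + 1 => exact absurd h.symm (hne j hm')
  | j + 1, 0 => exact absurd h (hne j hm)
  | j + 1, j' + 1 =>
    simp only [letter_succ, List.getD_eq_getElem _ _ (Nat.lt_of_succ_le hm),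
      List.getD_eq_getElem _ _ (Nat.lt_of_succ_le hm')] at h
    rw [List.Nodup.getElem_inj_iff (hS.sorted.imp ne_of_gt)] at h
    rw [h]

lemma WF.headD_lt_letter_iff (hS : S.WF) (hne : S.stack ≠ []) (hm : m ≤ S.stack.length) :
    S.stack.headD 0 < S.letter m ↔ m = 0 := by
  have hpos := List.length_pos_iff.2 hne
  rw [headD_eq_letter_one]
  cases m with
  | zero => simpa using Nat.lt_succ_of_le (hS.le_count _ (getD_mem_of_lt hpos))
  | succ j =>
    simpa using hS.le_of_mem_drop hpos (by simpa using getD_mem_of_lt (Nat.lt_of_succ_le hm))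

end State

open State

/-- `h` is the stack height; `h + 1 - m` is the height after move `m`, both when it opens a block
(`m = 0`) and when it returns to one. -/
def Legal : ℕ → List ℕ → Prop
  | _, [] => True
  | h, m :: ms => m ≤ h ∧ Legal (h + 1 - m) ms

@[simp] lemma legal_nil (h : ℕ) : Legal h [] := trivial

@[simp] lemma legal_cons (h m : ℕ) (ms : List ℕ) :
    Legal h (m :: ms) ↔ m ≤ h ∧ Legal (h + 1 - m) ms := Iff.rfl

lemma Legal.drop_run {S : State} {ms : List ℕ} (h : Legal S.stack.length ms) (p : ℕ) :
    Legal (S.run (ms.take p)).stack.length (ms.drop p) := by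
  induction ms generalizing S p with
  | nil => simp
  | cons m ms ih =>
    cases p with
    | zero => simpa [State.run] using h
    | succ p =>
      rw [legal_cons, ← length_stack_step h.1] at h
      simpa [State.run] using ih h.2 p

lemma State.WF.eq_of_decode_eq {S : State} (hS : S.WF) {ms ms' : List ℕ}
    (h : Legal S.stack.length ms) (h' : Legal S.stack.length ms')
    (he : S.decode ms = S.decode ms') : ms = ms' := by
  induction ms generalizing S ms' with
  | nil =>
    have := congrArg List.length he
    rw [length_decode, length_decode] at this
    exact (List.length_eq_zero_iff.1 this.symm).symm
  | cons m ms ih =>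
    cases ms' with
    | nil => simp [decode] at he
    | cons m' ms' =>
      simp only [decode, List.cons.injEq] at he
      obtain rfl := (hS.letter_eq_letter_iff h.1 h'.1).1 he.1
      rw [legal_cons, ← length_stack_step h.1] at h h'
      rw [ih (hS.step m) h.2 h'.2 he.2]

/-! ### Non-crossing sequences as legal move sequences -/

def Extendable (q : List ℕ) (v : ℕ) : Prop :=
  ∃ i < q.length, q.getD i 0 = v ∧ ∀ t, i < t → t < q.length → v < q.getD t 0

def Blocked (q : List ℕ) (v : ℕ) : Prop :=
  ∃ i k, i < k ∧ k < q.length ∧ q.getD i 0 = v ∧ q.getD k 0 < v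

section Extendable

variable {q : List ℕ} {v x : ℕ}

lemma extendable_append_singleton_self : Extendable (q ++ [x]) x :=
  ⟨q.length, by simp, getD_append_singleton_length, fun t h1 h2 => by simp at h2; omega⟩

lemma Extendable.append_singleton (h : Extendable q v) (hvx : v < x) :
    Extendable (q ++ [x]) v := by
  obtain ⟨i, hi, hiv, hlater⟩ := h
  refine ⟨i, by simp; omega, by rw [getD_append_singleton_of_lt hi, hiv], fun t hit ht => ?_⟩
  simp only [List.length_append, List.length_singleton] at ht
  rcases Nat.lt_succ_iff_lt_or_eq.1 ht with ht | rfl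
  · rw [getD_append_singleton_of_lt ht]; exact hlater t hit ht
  · rw [getD_append_singleton_length]; exact hvx

lemma Blocked.append_singleton (h : Blocked q v) : Blocked (q ++ [x]) v := by
  obtain ⟨i, k, hik, hk, hi, hkv⟩ := h
  exact ⟨i, k, hik, by simp; omega, by rw [getD_append_singleton_of_lt (by omega), hi],
    by rw [getD_append_singleton_of_lt hk]; exact hkv⟩

/-- Only letters larger than `x` follow its last occurrence, so a crossing closed by a new `x`
would already be closed by that occurrence. -/
lemma Extendable.not_crossing_append_singleton (h : Extendable q x) (hq : ¬ Crossing q) :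
    ¬ Crossing (q ++ [x]) := by
  obtain ⟨i₀, hi₀, hi₀x, hafter⟩ := h
  refine NoncrossingRGS.not_crossing_append_singleton hq fun i j k hij hjk hk hj hik => ?_
  by_contra! hlt
  have hji₀ : j < i₀ := by
    by_contra! hge
    rcases hge.lt_or_eq with hgt | rfl
    · exact absurd (hafter j hgt (by omega)) (by omega)
    · exact absurd (hafter k hjk hk) (by omega)
  have hki₀ : k < i₀ := by
    by_contra! hge
    rcases hge.lt_or_eq with hgt | rfl
    · exact absurd (hafter k hgt hk) (by omega)
    · omega
  exact hq ⟨i, j, k, i₀, hij, hjk, hki₀, hi₀, hik, hj.trans hi₀x.symm, by omega⟩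

end Extendable

/-- The invariant of the machine after it has written `q`: the open blocks on the stack are
extendable, and every other block used so far is blocked, i.e. reusing it would close a
crossing. -/
structure Reachable (q : List ℕ) (S : State) : Prop where
  wf : S.WF
  isRGS : IsRGS q
  not_crossing : ¬ Crossing q
  foldr_max_eq : q.foldr max 0 = S.count
  extendable : ∀ v ∈ S.stack, Extendable q v
  blocked : ∀ v, 1 ≤ v → v ≤ S.count → v ∉ S.stack → Blocked q v

namespace Reachable

variable {q : List ℕ} {S : State}

lemma start : Reachable [] State.start :=
  ⟨State.WF.start, by simp [IsRGS], by simp [Crossing], rfl, by simp [State.start],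
    fun v h1 h2 _ => absurd (h1.trans h2) (by simp [State.start])⟩

lemma push (h : Reachable q S) : Reachable (q ++ [S.count + 1]) (S.step 0) := by
  refine ⟨h.wf.step 0, ?_, ?_, ?_, ?_, ?_⟩
  · exact isRGS_append_singleton_iff.2 ⟨h.isRGS, by omega, by rw [h.foldr_max_eq]⟩
  · refine not_crossing_append_singleton h.not_crossing fun i j k _ hjk hk hj _ => ?_
    have := h.foldr_max_eq ▸ getD_le_foldr_max (by omega : j < q.length)
    omega
  · rw [foldr_max_append_singleton, h.foldr_max_eq]; simp
  · intro v hv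
    rcases List.mem_cons.1 hv with rfl | hv
    · exact extendable_append_singleton_self
    · exact (h.extendable v hv).append_singleton (Nat.lt_succ_of_le (h.wf.le_count v hv))
  · intro v h1 h2 hv
    simp only [State.step_zero, List.mem_cons, not_or] at h2 hv
    exact (h.blocked v h1 (by omega) hv.2).append_singleton

lemma pop (h : Reachable q S) {j : ℕ} (hj : j < S.stack.length) :
    Reachable (q ++ [S.stack.getD j 0]) (S.step (j + 1)) := by
  set x := S.stack.getD j 0
  have hxmem : x ∈ S.stack := getD_mem_of_lt hj
  obtain ⟨i₀, hi₀, hi₀x, -⟩ := h.extendable x hxmem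
  have hx1 : 1 ≤ x := h.isRGS.2.1 x (hi₀x ▸ getD_mem_of_lt hi₀)
  have hxc : x ≤ S.count := h.wf.le_count x hxmem
  refine ⟨h.wf.step _, ?_, ?_, ?_, ?_, ?_⟩
  · exact isRGS_append_singleton_iff.2 ⟨h.isRGS, hx1, by rw [h.foldr_max_eq]; omega⟩
  · exact (h.extendable x hxmem).not_crossing_append_singleton h.not_crossing
  · rw [foldr_max_append_singleton, h.foldr_max_eq]; simp [hxc]
  · intro v hv
    by_cases hvx : v = x
    · rw [hvx]; exact extendable_append_singleton_self
    · exact (h.extendable v (List.mem_of_mem_drop hv)).append_singleton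
        (lt_of_le_of_ne (h.wf.le_of_mem_drop hj hv) hvx)
  · intro v h1 h2 hv
    by_cases hvS : v ∈ S.stack
    · have hvtake : v ∈ S.stack.take j := by
        rw [← List.take_append_drop j S.stack, List.mem_append] at hvS
        exact hvS.resolve_right hv
      obtain ⟨i, hi, hiv, -⟩ := h.extendable v hvS
      exact ⟨i, q.length, hi, by simp, by rw [getD_append_singleton_of_lt hi, hiv],
        by rw [getD_append_singleton_length]; exact h.wf.lt_of_mem_take hj hvtake⟩
    · exact (h.blocked v h1 h2 hvS).append_singleton

lemma step (h : Reachable q S) {m : ℕ} (hm : m ≤ S.stack.length) :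
    Reachable (q ++ [S.letter m]) (S.step m) := by
  cases m with
  | zero => exact h.push
  | succ j => exact h.pop hm

lemma decode (h : Reachable q S) {ms : List ℕ} (hms : Legal S.stack.length ms) :
    Reachable (q ++ S.decode ms) (S.run ms) := by
  induction ms generalizing q S with
  | nil => simpa [State.decode, State.run] using h
  | cons m ms ih =>
    rw [legal_cons, ← length_stack_step hms.1] at hms
    simpa [State.decode, State.run] using ih (h.step hms.1) hms.2

lemma exists_letter_eq (h : Reachable q S) {x : ℕ} (hrgs : IsRGS (q ++ [x]))
    (hnc : ¬ Crossing (q ++ [x])) : ∃ m ≤ S.stack.length, S.letter m = x := by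
  obtain ⟨-, hx1, hxc⟩ := isRGS_append_singleton_iff.1 hrgs
  rw [h.foldr_max_eq] at hxc
  rcases hxc.lt_or_eq with hxc | hxc
  · by_cases hx : x ∈ S.stack
    · obtain ⟨j, hj, rfl⟩ := List.mem_iff_getElem.1 hx
      exact ⟨j + 1, hj, by simp [List.getElem?_eq_getElem hj]⟩
    obtain ⟨i, k, hik, hk, hi, hkx⟩ := h.blocked x hx1 (by omega) hx
    obtain ⟨r, hr, hrk⟩ := h.isRGS.exists_lt_getD_eq i (by omega) _
      (h.isRGS.2.1 _ (getD_mem_of_lt hk)) (hi ▸ hkx)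
    have hik' := hik.trans hk
    refine absurd ⟨r, i, k, q.length, hr, hik, hk, by simp, ?_, ?_, ?_⟩ hnc <;>
      simp only [getD_append_singleton_of_lt hk, getD_append_singleton_of_lt hik',
        getD_append_singleton_of_lt (hr.trans hik'), getD_append_singleton_length, hrk, hi, hkx]
  · exact ⟨0, Nat.zero_le _, hxc.symm⟩

lemma exists_decode_eq (h : Reachable q S) {l : List ℕ} (hrgs : IsRGS (q ++ l))
    (hnc : ¬ Crossing (q ++ l)) : ∃ ms, Legal S.stack.length ms ∧ S.decode ms = l := by
  induction l generalizing q S with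
  | nil => exact ⟨[], trivial, rfl⟩
  | cons x l ih =>
    rw [← List.singleton_append, ← List.append_assoc] at hrgs hnc
    obtain ⟨m, hm, rfl⟩ := h.exists_letter_eq hrgs.of_append fun hc => hnc hc.append
    obtain ⟨ms, hms, hdec⟩ := ih (h.step hm) hrgs hnc
    exact ⟨m :: ms, ⟨hm, length_stack_step hm ▸ hms⟩, by rw [State.decode, hdec]⟩

end Reachable

lemma ncseq_decode {n : ℕ} {ms : List ℕ} (hn : ms.length = n) (hms : Legal 0 ms) :
    NCseq n (State.start.decode ms) := by
  have h := Reachable.start.decode hms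
  rw [List.nil_append] at h
  exact ⟨(length_decode _ _).trans hn, h.isRGS, h.not_crossing⟩

lemma card_ncseq_eq_card_legal (P : List ℕ → Prop) (n : ℕ) :
    Nat.card {l : List ℕ // NCseq n l ∧ P l} =
      Nat.card {ms : List ℕ // (ms.length = n ∧ Legal 0 ms) ∧ P (State.start.decode ms)} := by
  refine (Nat.card_congr (Equiv.ofBijective
    (fun ms => ⟨State.start.decode ms.1, ncseq_decode ms.2.1.1 ms.2.1.2, ms.2.2⟩) ⟨?_, ?_⟩)).symm
  · intro ms ms' he
    exact Subtype.ext (WF.start.eq_of_decode_eq ms.2.1.2 ms'.2.1.2 (congrArg Subtype.val he))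
  · rintro ⟨l, hl, hP⟩
    obtain ⟨ms, hms, rfl⟩ := Reachable.start.exists_decode_eq hl.2.1 hl.2.2
    exact ⟨⟨ms, ⟨length_decode _ ms ▸ hl.1, hms⟩, hP⟩, rfl⟩

/-! ### Patterns as move triples -/

def Balanced (w : List ℕ) : Prop := ∀ k, 1 ≤ k → ∀ r, Legal k (w ++ r) ↔ Legal k r

/-- The moves `t` encode the pattern `τ`: once a letter has been written, leaving the machine in
state `U` with that letter on top of the stack, the letter followed by the letters of the next
three legal moves is order-isomorphic to `τ` exactly when those moves are `t`. -/
structure PatternMoves (τ t : List ℕ) : Prop where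
  length_pattern : τ.length = 4
  length_moves : t.length = 3
  balanced : Balanced t
  ordIso_iff : ∀ U : State, U.WF → U.stack ≠ [] → ∀ m₁ m₂ m₃, m₁ ≤ U.stack.length →
    m₂ ≤ (U.step m₁).stack.length → m₃ ≤ ((U.step m₁).step m₂).stack.length →
    (OrdIso τ (U.stack.headD 0 :: U.decode [m₁, m₂, m₃]) ↔ [m₁, m₂, m₃] = t)

lemma patternMoves_1121 : PatternMoves [1, 1, 2, 1] [1, 0, 2] := by
  refine ⟨rfl, rfl, fun _ hk _ => by simp [hk], fun U hU hne m₁ m₂ m₃ h₁ h₂ h₃ => ?_⟩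
  simp only [State.decode, ordIso_1121_iff, List.cons.injEq, and_true]
  rw [headD_eq_letter_one, hU.letter_eq_letter_iff h₁ (List.length_pos_iff.2 hne)]
  refine and_congr_right fun hm₁ => ?_
  subst hm₁
  rw [show U.letter 1 = (U.step 1).stack.headD 0 by simp [List.head?_eq_getElem?],
    (hU.step 1).headD_lt_letter_iff (by simpa using hne) h₂]
  refine and_congr_right fun hm₂ => ?_
  subst hm₂
  rw [show (U.step 1).stack.headD 0 = ((U.step 1).step 0).letter 2 by
      simp [List.head?_eq_getElem?],
    ((hU.step 1).step 0).letter_eq_letter_iff h₃ (by simp; exact List.length_pos_iff.2 hne)]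

lemma patternMoves_1211 : PatternMoves [1, 2, 1, 1] [0, 2, 1] := by
  refine ⟨rfl, rfl, fun _ hk _ => by simp [hk], fun U hU hne m₁ m₂ m₃ h₁ h₂ h₃ => ?_⟩
  simp only [State.decode, ordIso_1211_iff, List.cons.injEq, and_true]
  rw [hU.headD_lt_letter_iff hne h₁]
  refine and_congr_right fun hm₁ => ?_
  subst hm₁
  rw [headD_eq_letter_one, show U.letter 1 = (U.step 0).letter 2 by simp,
    (hU.step 0).letter_eq_letter_iff h₂ (by simp; exact List.length_pos_iff.2 hne)]
  refine and_congr_right fun hm₂ => ?_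
  subst hm₂
  rw [show (U.step 0).letter 2 = ((U.step 0).step 2).letter 1 by simp,
    ((hU.step 0).step 2).letter_eq_letter_iff h₃ (by simp; exact List.length_pos_iff.2 hne)]

lemma patternMoves_1221 : PatternMoves [1, 2, 2, 1] [0, 1, 2] := by
  refine ⟨rfl, rfl, fun _ hk _ => by simp [hk], fun U hU hne m₁ m₂ m₃ h₁ h₂ h₃ => ?_⟩
  simp only [State.decode, ordIso_1221_iff, List.cons.injEq, and_true]
  rw [hU.headD_lt_letter_iff hne h₁]
  refine and_congr_right fun hm₁ => ?_
  subst hm₁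
  rw [show U.letter 0 = (U.step 0).letter 1 by simp,
    (hU.step 0).letter_eq_letter_iff h₂ (by simp)]
  refine and_congr_right fun hm₂ => ?_
  subst hm₂
  rw [headD_eq_letter_one, show U.letter 1 = ((U.step 0).step 1).letter 2 by simp,
    ((hU.step 0).step 1).letter_eq_letter_iff h₃ (by simp; exact List.length_pos_iff.2 hne)]

lemma patternMoves_1231 : PatternMoves [1, 2, 3, 1] [0, 0, 3] := by
  refine ⟨rfl, rfl, fun _ hk _ => by simp [hk], fun U hU hne m₁ m₂ m₃ h₁ h₂ h₃ => ?_⟩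
  simp only [State.decode, ordIso_1231_iff, List.cons.injEq, and_true]
  rw [hU.headD_lt_letter_iff hne h₁]
  refine and_congr_right fun hm₁ => ?_
  subst hm₁
  rw [show U.letter 0 = (U.step 0).stack.headD 0 by simp,
    (hU.step 0).headD_lt_letter_iff (by simp) h₂]
  refine and_congr_right fun hm₂ => ?_
  subst hm₂
  rw [headD_eq_letter_one, show U.letter 1 = ((U.step 0).step 0).letter 3 by simp,
    ((hU.step 0).step 0).letter_eq_letter_iff h₃ (by simp; exact List.length_pos_iff.2 hne)]

namespace PatternMoves

variable {τ t : List ℕ} (hpat : PatternMoves τ t)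
include hpat

lemma ordIso_take_decode_iff {T : State} (hT : T.WF) {ms : List ℕ}
    (hms : Legal T.stack.length ms) : OrdIso τ ((T.decode ms).take 4) ↔ t <+: ms.tail := by
  have hτ := hpat.length_pattern
  have ht := hpat.length_moves
  rcases ms with _ | ⟨m₀, ms⟩
  · exact iff_of_false (fun h => by simp [OrdIso, hτ, decode] at h)
      (by simp [← List.length_eq_zero_iff, ht])
  obtain ⟨hm₀, hms⟩ := hms
  rw [← length_stack_step hm₀] at hms
  rw [List.tail_cons, List.prefix_iff_eq_take, ht, decode, List.take_succ_cons, take_decode,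
    ← headD_stack_step]
  rcases lt_or_ge ms.length 3 with hlen | hlen
  · refine iff_of_false (fun h => ?_) (fun h => ?_)
    · have := h.1; simp [hτ, length_decode] at this; omega
    · have := congrArg List.length h; simp [ht] at this; omega
  rcases ms with _ | ⟨m₁, _ | ⟨m₂, _ | ⟨m₃, rest⟩⟩⟩ <;> simp at hlen
  obtain ⟨h₁, h₂, h₃, -⟩ := hms
  rw [← length_stack_step h₁] at h₂ h₃
  rw [← length_stack_step h₂] at h₃
  rw [eq_comm]
  exact hpat.ordIso_iff _ (hT.step m₀) (stack_step_ne_nil hm₀) m₁ m₂ m₃ h₁ h₂ h₃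

lemma occAt_decode_iff {ms : List ℕ} (hms : Legal 0 ms) (p : ℕ) :
    occAt τ (State.start.decode ms) p ↔ t <+: ms.tail.drop p := by
  rw [occAt, hpat.length_pattern, drop_decode, List.drop_tail, ← List.tail_drop,
    hpat.ordIso_take_decode_iff (WF.start.run _) (Legal.drop_run (S := State.start) hms p)]

lemma card_occCount_eq (n k : ℕ) :
    Nat.card {l : List ℕ // NCseq n l ∧ occCount τ l = k} =
      Nat.card {ms : List ℕ // (ms.length = n ∧ Legal 0 ms) ∧ t.infixCount ms.tail = k} := by
  rw [card_ncseq_eq_card_legal]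
  refine Nat.card_congr (Equiv.subtypeEquivRight fun ms => and_congr_right fun hms => ?_)
  rw [occCount, List.infixCount,
    Nat.card_congr (Equiv.subtypeEquivRight (hpat.occAt_decode_iff hms.2))]

end PatternMoves

/-! ### Exchanging the move triples of two patterns -/

lemma legal_swapWords {u v : List ℕ} (h : u.OverlapFree v) (hu : Balanced u) (hv : Balanced v)
    (s : List ℕ) : ∀ k, 1 ≤ k → Legal k s → Legal k (List.swapWords u v s) := by
  induction s using h.induction_on with
  | nil => simp
  | left t ih =>
    intro k hk hs
    rw [List.swapWords_append_left h.ne_nil, hv k hk]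
    exact ih k hk ((hu k hk t).1 hs)
  | right t ih =>
    intro k hk hs
    rw [h.swapWords_append_right, hu k hk]
    exact ih k hk ((hv k hk t).1 hs)
  | cons a s hu' hv' ih =>
    intro k hk hs
    rw [List.swapWords_cons hu' hv']
    exact ⟨hs.1, ih _ (by have := hs.1; omega) hs.2⟩

lemma card_infixCount_eq {u v : List ℕ} (h : u.OverlapFree v) (hu : Balanced u)
    (hv : Balanced v) (n k : ℕ) :
    Nat.card {ms : List ℕ // (ms.length = n ∧ Legal 0 ms) ∧ u.infixCount ms.tail = k} =
      Nat.card {ms : List ℕ // (ms.length = n ∧ Legal 0 ms) ∧ v.infixCount ms.tail = k} := by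
  set f : List ℕ → List ℕ := fun ms => ms.modifyTailIdx 1 (List.swapWords u v)
  have hf : Function.Involutive f := by
    rintro (_ | ⟨m, s⟩) <;> simp [f, h.swapWords_swapWords]
  have hlen : ∀ ms, (f ms).length = ms.length := by
    rintro (_ | ⟨m, s⟩) <;> simp [f, h.length_swapWords]
  have hlegal : ∀ ms, Legal 0 ms → Legal 0 (f ms) := by
    rintro (_ | ⟨m, s⟩) ⟨hm, hs⟩
    · trivial
    · exact ⟨hm, legal_swapWords h hu hv s _ (by omega) hs⟩
  have hcount : ∀ ms, u.infixCount (f ms).tail = v.infixCount ms.tail := by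
    intro ms
    rw [show (f ms).tail = List.swapWords u v ms.tail by cases ms <;> simp [f]]
    exact h.infixCount_swapWords _
  refine Nat.card_congr (Equiv.subtypeEquiv (hf.toPerm f) fun ms => ?_)
  rw [Function.Involutive.coe_toPerm, hlen, ← hcount (f ms), hf ms]
  exact and_congr_left' (and_congr_right' ⟨hlegal ms, fun h' => hf ms ▸ hlegal _ h'⟩)

lemma card_occCount_eq_of_overlapFree {τ τ' u v : List ℕ} (hτ : PatternMoves τ u)
    (hτ' : PatternMoves τ' v) (h : u.OverlapFree v) (n k : ℕ) :
    Nat.card {l : List ℕ // NCseq n l ∧ occCount τ l = k} =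
      Nat.card {l : List ℕ // NCseq n l ∧ occCount τ' l = k} := by
  rw [hτ.card_occCount_eq, hτ'.card_occCount_eq, card_infixCount_eq h hτ.balanced hτ'.balanced]

end NoncrossingRGS

/-- The subwords 1121, 1211, 1221 and 1231 are all equidistributed on NC_n. -/
theorem stmt13 (n k : ℕ) :
    Nat.card {l : List ℕ // NCseq n l ∧ occCount [1, 1, 2, 1] l = k} =
      Nat.card {l : List ℕ // NCseq n l ∧ occCount [1, 2, 1, 1] l = k} ∧
    Nat.card {l : List ℕ // NCseq n l ∧ occCount [1, 2, 1, 1] l = k} =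
      Nat.card {l : List ℕ // NCseq n l ∧ occCount [1, 2, 2, 1] l = k} ∧
    Nat.card {l : List ℕ // NCseq n l ∧ occCount [1, 2, 2, 1] l = k} =
      Nat.card {l : List ℕ // NCseq n l ∧ occCount [1, 2, 3, 1] l = k} := by
  open NoncrossingRGS in
  obtain ⟨h₁, h₂, h₃⟩ : _ ∧ _ ∧ _ :=
    ⟨card_occCount_eq_of_overlapFree patternMoves_1121 patternMoves_1221
      (by constructor <;> decide) n k,
    card_occCount_eq_of_overlapFree patternMoves_1211 patternMoves_1221
      (by constructor <;> decide) n k,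
    card_occCount_eq_of_overlapFree patternMoves_1221 patternMoves_1231
      (by constructor <;> decide) n k⟩
  exact ⟨h₁.trans h₂.symm, h₂, h₃⟩
end

section
/- For n ≥ 3, the total number of occurrences of the subword 121 over all non-crossing partitions of [n] equals binom(2n−4, n−1). -/
/-!
A word is the restricted growth sequence of a non-crossing partition iff it is built letter by
letter, each new letter either opening a new block (current maximum + 1) or being *active*: a
letter having an occurrence after which no smaller letter appears. Appending a letter changes the
set of active letters in a way that depends only on its rank there, so the number of non-crossing
continuations of length `t` depends only on the number `k` of active letters and satisfies a
ballot-number recursion; for `k = 0` it gives `|NC_m| = Cat(m)`.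

In a non-crossing word, an occurrence of `121` at position `i` must have its middle letter open a
new block and its last letter return to the letter at `i`; these two steps leave the active letters
unchanged. Hence the words with an occurrence at `i` are as many as the non-crossing words of
length `n - 2`, and the total is `(n - 2) Cat(n - 2) = binom(2n - 4, n - 1)`.
-/

namespace NCWord

open List Finset

lemma getD_mem_of_lt {l : List ℕ} {i : ℕ} (hi : i < l.length) : l.getD i 0 ∈ l := by
  rw [getD_eq_getElem _ _ hi]; exact getElem_mem hi

lemma getD_take_of_lt (l : List ℕ) {i s : ℕ} (h : i < s) : (l.take s).getD i 0 = l.getD i 0 := by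
  simp [getD_eq_getElem?_getD, h]

lemma exists_getD_eq_of_mem {l : List ℕ} {x : ℕ} (hx : x ∈ l) :
    ∃ i < l.length, l.getD i 0 = x := by
  obtain ⟨i, hi, rfl⟩ := getElem_of_mem hx
  exact ⟨i, hi, getD_eq_getElem _ _ hi⟩

def maxLetter (l : List ℕ) : ℕ := l.foldr max 0

lemma maxLetter_append_singleton (l : List ℕ) (v : ℕ) :
    maxLetter (l ++ [v]) = max (maxLetter l) v := by
  induction l with
  | nil => simp [maxLetter]
  | cons x xs ih => simp only [maxLetter, cons_append, foldr_cons] at ih ⊢; rw [ih, max_assoc]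

lemma le_maxLetter {l : List ℕ} {x : ℕ} (hx : x ∈ l) : x ≤ maxLetter l :=
  le_max_of_le' 0 hx le_rfl

lemma getD_le_maxLetter {l : List ℕ} {i : ℕ} (hi : i < l.length) : l.getD i 0 ≤ maxLetter l :=
  le_maxLetter (getD_mem_of_lt hi)

/-- The blocks that a non-crossing continuation of `l` may still return to. -/
def activeLetters (l : List ℕ) : Finset ℕ := l.foldl (fun s v => insert v (s.filter (· ≤ v))) ∅

lemma activeLetters_append_singleton (l : List ℕ) (v : ℕ) :
    activeLetters (l ++ [v]) = insert v ((activeLetters l).filter (· ≤ v)) := by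
  simp [activeLetters]

lemma mem_activeLetters {l : List ℕ} {x : ℕ} :
    x ∈ activeLetters l ↔
      ∃ j < l.length, l.getD j 0 = x ∧ ∀ k, j < k → k < l.length → x ≤ l.getD k 0 := by
  induction l using reverseRecOn with
  | nil => simp [activeLetters]
  | append_singleton l v ih =>
    simp only [activeLetters_append_singleton, Finset.mem_insert, Finset.mem_filter, ih,
      length_append, length_singleton]
    constructor
    · rintro (rfl | ⟨⟨j, hj, rfl, hafter⟩, hle⟩)
      · exact ⟨l.length, by omega, by simp, fun k hk hk' => by omega⟩
      · refine ⟨j, by omega, getD_append _ _ _ _ hj, fun k hk hk' => ?_⟩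
        rcases Nat.lt_or_ge k l.length with hkl | hkl
        · rw [getD_append _ _ _ _ hkl]; exact hafter k hk hkl
        · rw [getD_append_right _ _ _ _ hkl, show k - l.length = 0 by omega]; simpa using hle
    · rintro ⟨j, hj, rfl, hafter⟩
      rcases Nat.lt_or_ge j l.length with hjl | hjl
      · right
        have hlast := hafter l.length (by omega) (by omega)
        simp only [getD_append _ _ _ _ hjl, getD_append_right _ _ _ _ le_rfl, Nat.sub_self]
          at hlast ⊢
        refine ⟨⟨j, hjl, rfl, fun k hk hk' => ?_⟩, by simpa using hlast⟩
        have h := hafter k hk (by omega)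
        rwa [getD_append _ _ _ _ hjl, getD_append _ _ _ _ hk'] at h
      · left
        rw [getD_append_right _ _ _ _ hjl, show j - l.length = 0 by omega]
        simp

lemma le_maxLetter_of_mem_activeLetters {l : List ℕ} {x : ℕ} (hx : x ∈ activeLetters l) :
    x ≤ maxLetter l := by
  obtain ⟨j, hj, rfl, -⟩ := mem_activeLetters.mp hx
  exact getD_le_maxLetter hj

lemma isRGS_append_singleton_iff {l : List ℕ} {v : ℕ} :
    IsRGS (l ++ [v]) ↔ IsRGS l ∧ 1 ≤ v ∧ v ≤ maxLetter l + 1 := by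
  rcases eq_or_ne l [] with rfl | hne
  · simp [IsRGS, maxLetter]
    omega
  have hl : 0 < l.length := length_pos_iff.mpr hne
  have hold : ∀ i, i + 1 < l.length →
      ((l ++ [v]).getD (i + 1) 0 = l.getD (i + 1) 0 ∧
        (l ++ [v]).take (i + 1) = l.take (i + 1)) :=
    fun i hi => ⟨getD_append _ _ _ _ hi, take_append_of_le_length hi.le⟩
  have hnew : (l ++ [v]).getD (l.length - 1 + 1) 0 = v ∧
      ((l ++ [v]).take (l.length - 1 + 1)).foldr max 0 = maxLetter l := by
    rw [Nat.sub_add_cancel hl, take_append_of_le_length le_rfl, take_length]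
    simp [maxLetter]
  have h0 : (l ++ [v]).getD 0 1 = l.getD 0 1 := getD_append _ _ _ _ hl
  constructor
  · rintro ⟨h0', hpos, hgrow⟩
    refine ⟨⟨h0 ▸ h0', fun x hx => hpos x (mem_append_left _ hx), fun i hi => ?_⟩,
      hpos v (by simp), ?_⟩
    · rw [← (hold i hi).1, ← (hold i hi).2]; exact hgrow i (by simp; omega)
    · rw [← hnew.1, ← hnew.2]; exact hgrow _ (by simp; omega)
  · rintro ⟨⟨h0', hpos, hgrow⟩, hv1, hv2⟩
    refine ⟨h0 ▸ h0', fun x hx => ?_, fun i hi => ?_⟩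
    · rcases mem_append.mp hx with hx | hx
      · exact hpos x hx
      · rw [List.mem_singleton.mp hx]; exact hv1
    · rw [length_append, length_singleton] at hi
      rcases Nat.lt_or_ge (i + 1) l.length with hil | hil
      · rw [(hold i hil).1, (hold i hil).2]; exact hgrow i hil
      · obtain rfl : i = l.length - 1 := by omega
        rw [hnew.1, hnew.2]; exact hv2

lemma IsRGS.of_append {l w : List ℕ} (h : IsRGS (l ++ w)) : IsRGS l := by
  induction w using reverseRecOn with
  | nil => simpa using h
  | append_singleton w v ih =>
    rw [← List.append_assoc, isRGS_append_singleton_iff] at h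
    exact ih h.1

lemma mem_of_isRGS {l : List ℕ} (hl : IsRGS l) {v : ℕ} (hv1 : 1 ≤ v) (hv : v ≤ maxLetter l) :
    v ∈ l := by
  induction l using reverseRecOn with
  | nil => rw [maxLetter, foldr_nil] at hv; omega
  | append_singleton l x ih =>
    obtain ⟨hl, -, hx⟩ := isRGS_append_singleton_iff.mp hl
    rw [maxLetter_append_singleton] at hv
    rcases Nat.lt_or_ge (maxLetter l) v with hlt | hle
    · obtain rfl : v = x := by omega
      simp
    · exact mem_append_left _ (ih hl hle)

def Avoids212 (l : List ℕ) : Prop :=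
  ∀ j k m, j < k → k < m → m < l.length → l.getD j 0 = l.getD m 0 → l.getD j 0 ≤ l.getD k 0

lemma avoids212_append_singleton_iff {l : List ℕ} {v : ℕ} :
    Avoids212 (l ++ [v]) ↔ Avoids212 l ∧
      ∀ j k, j < k → k < l.length → l.getD j 0 = v → v ≤ l.getD k 0 := by
  have hget : ∀ i, i < l.length → (l ++ [v]).getD i 0 = l.getD i 0 :=
    fun i hi => getD_append _ _ _ _ hi
  have hlast : (l ++ [v]).getD l.length 0 = v := by simp
  constructor
  · intro h
    refine ⟨fun j k m hjk hkm hm heq => ?_, fun j k hjk hk heq => ?_⟩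
    · have := h j k m hjk hkm (by simp; omega) (by rwa [hget j (by omega), hget m hm])
      rwa [hget j (by omega), hget k (by omega)] at this
    · have := h j k l.length hjk hk (by simp) (by rw [hlast, hget j (by omega), heq])
      rwa [hget j (by omega), hget k hk, heq] at this
  · rintro ⟨h, hv⟩ j k m hjk hkm hm heq
    rw [length_append, length_singleton] at hm
    rw [hget j (by omega)] at heq ⊢
    rw [hget k (by omega)]
    rcases Nat.lt_or_ge m l.length with hml | hml
    · rw [hget m hml] at heq
      exact h j k m hjk hkm hml heq
    · obtain rfl : m = l.length := by omega
      rw [hlast] at heq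
      exact heq ▸ hv j k hjk hkm heq

def IsNC (l : List ℕ) : Prop := IsRGS l ∧ Avoids212 l

def admissible (l : List ℕ) : Finset ℕ := insert (maxLetter l + 1) (activeLetters l)

lemma mem_activeLetters_iff_of_avoids212 {l : List ℕ} (hl : Avoids212 l) {v : ℕ} :
    v ∈ activeLetters l ↔
      v ∈ l ∧ ∀ j k, j < k → k < l.length → l.getD j 0 = v → v ≤ l.getD k 0 := by
  rw [mem_activeLetters]
  constructor
  · rintro ⟨j₀, hj₀, rfl, hafter⟩
    refine ⟨getD_mem_of_lt hj₀, fun j k hjk hk heq => ?_⟩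
    rcases lt_trichotomy k j₀ with hlt | rfl | hgt
    · exact heq ▸ hl j k j₀ hjk hlt hj₀ heq
    · exact le_rfl
    · exact hafter k hgt hk
  · rintro ⟨hv, hafter⟩
    obtain ⟨j, hj, rfl⟩ := exists_getD_eq_of_mem hv
    exact ⟨j, hj, rfl, fun k hjk hk => hafter j k hjk hk rfl⟩

lemma isNC_append_singleton_iff {l : List ℕ} (hl : IsNC l) {v : ℕ} :
    IsNC (l ++ [v]) ↔ v ∈ admissible l := by
  rw [IsNC, isRGS_append_singleton_iff, avoids212_append_singleton_iff, admissible,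
    Finset.mem_insert, mem_activeLetters_iff_of_avoids212 hl.2]
  simp only [hl.1, hl.2, true_and]
  constructor
  · rintro ⟨⟨hv1, hv⟩, hafter⟩
    rcases Nat.lt_or_ge (maxLetter l) v with hlt | hle
    · left; omega
    · exact .inr ⟨mem_of_isRGS hl.1 hv1 hle, hafter⟩
  · rintro (rfl | ⟨hv, hafter⟩)
    · refine ⟨⟨by omega, le_rfl⟩, fun j k hjk hk heq => ?_⟩
      have := getD_le_maxLetter (l := l) (i := j) (by omega)
      omega
    · exact ⟨⟨hl.1.2.1 v hv, by have := le_maxLetter hv; omega⟩, hafter⟩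

lemma IsNC.of_append {l w : List ℕ} (h : IsNC (l ++ w)) : IsNC l := by
  induction w using reverseRecOn with
  | nil => simpa using h
  | append_singleton w v ih =>
    rw [← List.append_assoc, IsNC, isRGS_append_singleton_iff,
      avoids212_append_singleton_iff] at h
    exact ih ⟨h.1.1, h.2.1⟩

lemma isNC_nil : IsNC [] :=
  ⟨⟨rfl, by simp, by simp⟩, by simp [Avoids212]⟩

lemma not_crossing_iff_avoids212 {l : List ℕ} (hl : IsRGS l) : ¬ Crossing l ↔ Avoids212 l := by
  rw [← not_iff_not, not_not, Avoids212]
  push Not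
  constructor
  · rintro ⟨i, j, k, m, hij, hjk, hkm, hm, hik, hjm, hlt⟩
    exact ⟨j, k, m, hjk, hkm, hm, hjm, by omega⟩
  · rintro ⟨j, k, m, hjk, hkm, hm, hjm, hlt⟩
    have hpre : IsRGS (l.take (j + 1)) := IsRGS.of_append (w := l.drop (j + 1)) (by simpa)
    have hbelow : l.getD k 0 ≤ maxLetter (l.take (j + 1)) :=
      calc l.getD k 0 ≤ l.getD j 0 := hlt.le
        _ = (l.take (j + 1)).getD j 0 := (getD_take_of_lt l j.lt_succ_self).symm
        _ ≤ _ := getD_le_maxLetter (by simp; omega)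
    obtain ⟨i, hi, hik⟩ := exists_getD_eq_of_mem
      (mem_of_isRGS hpre (hl.2.1 _ (getD_mem_of_lt (by omega))) hbelow)
    rw [length_take] at hi
    rw [getD_take_of_lt l (by omega)] at hik
    have hij : i < j := lt_of_le_of_ne (by omega) (by rintro rfl; omega)
    exact ⟨i, j, k, m, hij, hjk, hkm, hm, hik, hjm, by omega⟩

def extensions (l : List ℕ) : ℕ → Finset (List ℕ)
  | 0 => {[]}
  | t + 1 => (admissible l).biUnion fun v => (extensions (l ++ [v]) t).image (v :: ·)

lemma mem_extensions {l : List ℕ} (hl : IsNC l) {t : ℕ} {w : List ℕ} :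
    w ∈ extensions l t ↔ w.length = t ∧ IsNC (l ++ w) := by
  induction t generalizing l w with
  | zero =>
    simp only [extensions, Finset.mem_singleton, length_eq_zero_iff]
    exact ⟨fun h => ⟨h, by simpa [h]⟩, And.left⟩
  | succ t ih =>
    simp only [extensions, Finset.mem_biUnion, Finset.mem_image]
    constructor
    · rintro ⟨v, hv, u, hu, rfl⟩
      obtain ⟨hlen, hnc⟩ := (ih ((isNC_append_singleton_iff hl).mpr hv)).mp hu
      exact ⟨by simp [hlen], by simpa using hnc⟩
    · rintro ⟨hlen, hnc⟩
      obtain ⟨v, u, rfl⟩ := exists_cons_of_length_eq_add_one hlen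
      have hv : IsNC (l ++ [v]) := IsNC.of_append (w := u) (by simpa using hnc)
      exact ⟨v, (isNC_append_singleton_iff hl).mp hv, u,
        (ih hv).mpr ⟨by simpa using hlen, by simpa using hnc⟩, rfl⟩

lemma extensions_add {l : List ℕ} (hl : IsNC l) (s t : ℕ) :
    extensions l (s + t) =
      (extensions l s).biUnion fun q => (extensions (l ++ q) t).image (q ++ ·) := by
  ext w
  simp only [Finset.mem_biUnion, Finset.mem_image, mem_extensions hl]
  constructor
  · rintro ⟨hlen, hnc⟩
    have hnc' : IsNC (l ++ w.take s ++ w.drop s) := by rwa [List.append_assoc, take_append_drop]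
    refine ⟨w.take s, ⟨by simp; omega, hnc'.of_append⟩, w.drop s,
      (mem_extensions hnc'.of_append).mpr ⟨by simp; omega, hnc'⟩, take_append_drop s w⟩
  · rintro ⟨q, ⟨hq, hlq⟩, w', hw', rfl⟩
    obtain ⟨hw'len, hnc⟩ := (mem_extensions hlq).mp hw'
    exact ⟨by simp [hq, hw'len], by rwa [← List.append_assoc]⟩

lemma card_filter_extensions_add {l : List ℕ} (hl : IsNC l) (s t : ℕ) (p : List ℕ → Prop)
    [DecidablePred p] (hp : ∀ q w, q.length = s → (p (q ++ w) ↔ p q)) :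
    #((extensions l (s + t)).filter p) =
      ∑ q ∈ (extensions l s).filter p, #(extensions (l ++ q) t) := by
  rw [extensions_add hl, Finset.filter_biUnion, card_biUnion, Finset.sum_filter]
  · refine Finset.sum_congr rfl fun q hq => ?_
    have hqs := ((mem_extensions hl).mp hq).1
    rw [Finset.filter_image, card_image_of_injective _ (append_right_injective q)]
    split_ifs with hpq
    · exact congrArg card (Finset.filter_true_of_mem fun w _ => (hp q w hqs).mpr hpq)
    · exact card_eq_zero.mpr (Finset.filter_false_of_mem fun w _ => by simpa [hp q w hqs])
  · intro q₁ hq₁ q₂ hq₂ hne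
    simp only [Function.onFun, Finset.disjoint_left, Finset.mem_filter, Finset.mem_image]
    rintro _ ⟨⟨w₁, -, rfl⟩, -⟩ ⟨⟨w₂, -, heq⟩, -⟩
    refine hne (append_inj heq.symm ?_).1
    rw [((mem_extensions hl).mp hq₁).1, ((mem_extensions hl).mp hq₂).1]

lemma card_extensions_add {l : List ℕ} (hl : IsNC l) (s t : ℕ) :
    #(extensions l (s + t)) = ∑ q ∈ extensions l s, #(extensions (l ++ q) t) := by
  simpa using card_filter_extensions_add hl s t (fun _ => True) (by simp)

lemma ncseq_iff_mem_extensions {n : ℕ} {l : List ℕ} : NCseq n l ↔ l ∈ extensions [] n := by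
  rw [mem_extensions isNC_nil, nil_append, NCseq, IsNC]
  exact and_congr_right fun _ => and_congr_right not_crossing_iff_avoids212

-- Opening a new block leaves `k + 1` active letters, returning to the `(j + 1)`-st smallest
-- active letter leaves `j + 1` of them.
def numExtensions : ℕ → ℕ → ℕ
  | 0, _ => 1
  | t + 1, k => numExtensions t (k + 1) + ∑ j ∈ range k, numExtensions t (j + 1)

lemma sum_card_filter_le (f : ℕ → ℕ) (s : Finset ℕ) :
    ∑ v ∈ s, f #(s.filter (· ≤ v)) = ∑ j ∈ range #s, f (j + 1) := by
  induction s using Finset.induction_on_max with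
  | empty => simp
  | insert a s hlt ih =>
    have ha : a ∉ s := fun h => (hlt a h).false
    have hfilter : ∀ v ∈ s, (insert a s).filter (· ≤ v) = s.filter (· ≤ v) := fun v hv => by
      rw [Finset.filter_insert, if_neg (hlt v hv).not_ge]
    rw [sum_insert ha, Finset.sum_congr rfl fun v hv => by rw [hfilter v hv], ih,
      Finset.filter_true_of_mem fun x hx => ?_, card_insert_of_notMem ha, Finset.sum_range_succ,
      add_comm]
    rcases Finset.mem_insert.mp hx with rfl | hx
    · exact le_rfl
    · exact (hlt x hx).le

lemma activeLetters_append_max_succ (l : List ℕ) :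
    activeLetters (l ++ [maxLetter l + 1]) = insert (maxLetter l + 1) (activeLetters l) := by
  rw [activeLetters_append_singleton, Finset.filter_true_of_mem fun x hx => by
    have := le_maxLetter_of_mem_activeLetters hx; omega]

lemma card_extensions {l : List ℕ} (hl : IsNC l) (t : ℕ) :
    #(extensions l t) = numExtensions t #(activeLetters l) := by
  induction t generalizing l with
  | zero => simp [extensions, numExtensions]
  | succ t ih =>
    have hcard : ∀ v ∈ admissible l, #((extensions (l ++ [v]) t).image (v :: ·)) =
        numExtensions t #(activeLetters (l ++ [v])) := fun v hv => by
      rw [card_image_of_injective _ cons_injective, ih ((isNC_append_singleton_iff hl).mpr hv)]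
    have hnew : maxLetter l + 1 ∉ activeLetters l := fun h => by
      have := le_maxLetter_of_mem_activeLetters h; omega
    rw [extensions, card_biUnion fun v _ w _ hne => ?disjoint, sum_congr rfl hcard, admissible,
      sum_insert hnew, numExtensions, activeLetters_append_max_succ, card_insert_of_notMem hnew,
      ← sum_card_filter_le]
    case disjoint =>
      simp only [Function.onFun, Finset.disjoint_left, Finset.mem_image]
      rintro _ ⟨u, -, rfl⟩ ⟨u', -, heq⟩
      exact hne (cons_eq_cons.mp heq).1.symm
    refine congrArg _ (sum_congr rfl fun v hv => ?_)
    rw [activeLetters_append_singleton,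
      Finset.insert_eq_of_mem (s := (activeLetters l).filter (· ≤ v)) (by simp [hv])]

lemma numExtensions_succ_zero (t : ℕ) : numExtensions (t + 1) 0 = numExtensions t 1 := by
  simp [numExtensions]

lemma numExtensions_succ_succ (t k : ℕ) :
    numExtensions (t + 1) (k + 1) = numExtensions (t + 1) k + numExtensions t (k + 2) := by
  simp only [numExtensions, Finset.sum_range_succ]
  ring

/-- `numExtensions (t + 1) k` is a ballot number. -/
lemma numExtensions_add_choose (t k : ℕ) :
    numExtensions (t + 1) k + (2 * t + 2 + k).choose t = (2 * t + 2 + k).choose (t + 1) := by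
  induction t generalizing k with
  | zero =>
    simp only [numExtensions, sum_const, card_range, smul_eq_mul, mul_one, mul_zero, zero_add,
      Nat.choose_zero_right, Nat.choose_one_right]
    omega
  | succ t iht =>
    induction k with
    | zero =>
      have h := iht 1
      have p₁ := Nat.choose_succ_succ' (2 * t + 3) t
      have p₂ := Nat.choose_succ_succ' (2 * t + 3) (t + 1)
      have hsymm : (2 * t + 3).choose (t + 2) = (2 * t + 3).choose (t + 1) :=
        Nat.choose_symm_of_eq_add (by omega)
      rw [numExtensions_succ_zero]
      ring_nf at h p₁ p₂ hsymm ⊢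
      omega
    | succ k ihk =>
      have h := iht (k + 2)
      have p₁ := Nat.choose_succ_succ' (2 * t + 4 + k) t
      have p₂ := Nat.choose_succ_succ' (2 * t + 4 + k) (t + 1)
      rw [numExtensions_succ_succ]
      ring_nf at h p₁ p₂ ihk ⊢
      omega

lemma mul_numExtensions_zero (m : ℕ) : m * numExtensions m 0 = (2 * m).choose (m + 1) := by
  rcases m with _ | t
  · simp
  have h := numExtensions_add_choose t 0
  have hrank := Nat.choose_succ_right_eq (2 * t + 2) t
  have hsymm : (2 * t + 2).choose (t + 2) = (2 * t + 2).choose t :=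
    Nat.choose_symm_of_eq_add (by omega)
  rw [show 2 * t + 2 - t = t + 2 by omega] at hrank
  rw [show 2 * (t + 1) = 2 * t + 2 by ring, hsymm]
  nlinarith

lemma ordIso_121_iff {x : List ℕ} : OrdIso [1, 2, 1] x ↔ ∃ a b, a < b ∧ x = [a, b, a] := by
  constructor
  · rintro ⟨hlen, hcmp⟩
    obtain ⟨a, b, c, rfl⟩ := length_eq_three.mp hlen.symm
    have hab := (hcmp 0 1 (by simp) (by simp)).mp (by simp)
    have hac := hcmp 0 2 (by simp) (by simp)
    have hca := hcmp 2 0 (by simp) (by simp)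
    simp only [getD_cons_zero, getD_cons_succ, lt_self_iff_false, false_iff, not_lt] at hab hac hca
    exact ⟨a, b, hab, by rw [le_antisymm hac hca]⟩
  · rintro ⟨a, b, hab, rfl⟩
    refine ⟨rfl, fun j k hj hk => ?_⟩
    simp only [length_cons, length_nil] at hj hk
    interval_cases j <;> interval_cases k <;> simp only [getD_cons_zero, getD_cons_succ] <;> omega

lemma occAt_append_of_le {τ q : List ℕ} {i : ℕ} (w : List ℕ) (h : i + τ.length ≤ q.length) :
    occAt τ (q ++ w) i ↔ occAt τ q i := by
  rw [occAt, occAt, drop_append_of_le_length (by omega),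
    take_append_of_le_length (by simp; omega)]

lemma add_length_le_of_occAt {τ l : List ℕ} (hτ : τ ≠ []) {i : ℕ} (h : occAt τ l i) :
    i + τ.length ≤ l.length := by
  have hlen := h.1
  have hpos := length_pos_iff.mpr hτ
  simp only [length_take, length_drop] at hlen
  omega

open scoped Classical in
lemma totalOcc_eq_sum {τ : List ℕ} (hτ : τ ≠ []) (n : ℕ) :
    totalOcc n τ =
      ∑ i ∈ Finset.range (n + 1 - τ.length), #((extensions [] n).filter (occAt τ · i)) := by
  have hset : {p : List ℕ × ℕ | NCseq n p.1 ∧ occAt τ p.1 p.2} =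
      ↑((extensions [] n ×ˢ Finset.range (n + 1 - τ.length)).filter
        fun p => occAt τ p.1 p.2) := by
    ext ⟨l, i⟩
    simp only [Set.mem_ofPred_eq, coe_filter, Finset.mem_product, Finset.mem_range,
      ncseq_iff_mem_extensions]
    refine ⟨fun ⟨hl, hocc⟩ => ⟨⟨hl, ?_⟩, hocc⟩, fun ⟨⟨hl, _⟩, hocc⟩ => ⟨hl, hocc⟩⟩
    have := add_length_le_of_occAt hτ hocc
    have := ((mem_extensions isNC_nil).mp hl).1
    omega
  rw [totalOcc, ← Set.coe_ofPred, hset, Nat.card_coe_set_eq, Set.ncard_coe_finset, card_filter,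
    sum_product_right]
  simp only [← card_filter]

def appendPeak (l : List ℕ) : List ℕ := l ++ [maxLetter l + 1, l.getLastD 0]

lemma appendPeak_concat (l : List ℕ) (a : ℕ) :
    appendPeak (l ++ [a]) = l ++ [a] ++ [maxLetter (l ++ [a]) + 1] ++ [a] := by
  simp [appendPeak]

lemma appendPeak_injective : Function.Injective appendPeak := fun l₁ l₂ h =>
  (append_inj h (by simpa [appendPeak] using congrArg length h)).1

lemma le_of_mem_activeLetters_concat {l : List ℕ} {a x : ℕ} (hx : x ∈ activeLetters (l ++ [a])) :
    x ≤ a := by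
  rw [activeLetters_append_singleton, Finset.mem_insert, Finset.mem_filter] at hx
  rcases hx with rfl | ⟨-, hx⟩
  exacts [le_rfl, hx]

lemma activeLetters_appendPeak {l : List ℕ} (hne : l ≠ []) :
    activeLetters (appendPeak l) = activeLetters l := by
  obtain ⟨l, a, rfl⟩ := (eq_nil_or_concat' _).resolve_left hne
  have ha : a < maxLetter (l ++ [a]) + 1 := by
    have := le_maxLetter (mem_append_right l (List.mem_singleton_self a)); omega
  rw [appendPeak_concat, activeLetters_append_singleton, activeLetters_append_max_succ, Finset.filter_insert, if_neg ha.not_ge,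
    Finset.filter_true_of_mem fun x hx => le_of_mem_activeLetters_concat hx,
    Finset.insert_eq_of_mem (by simp [activeLetters_append_singleton])]

lemma isNC_appendPeak {l : List ℕ} (hl : IsNC l) (hne : l ≠ []) : IsNC (appendPeak l) := by
  obtain ⟨l, a, rfl⟩ := (eq_nil_or_concat' _).resolve_left hne
  have hmax : IsNC (l ++ [a] ++ [maxLetter (l ++ [a]) + 1]) :=
    (isNC_append_singleton_iff hl).mpr (Finset.mem_insert_self _ _)
  rw [appendPeak_concat, isNC_append_singleton_iff hmax, admissible,
    activeLetters_append_max_succ]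
  simp [activeLetters_append_singleton]

lemma eq_maxLetter_succ_of_isNC {l : List ℕ} {a b : ℕ} (h : IsNC (l ++ [a] ++ [b]))
    (hab : a < b) : b = maxLetter (l ++ [a]) + 1 := by
  rcases Finset.mem_insert.mp ((isNC_append_singleton_iff h.of_append).mp h) with hb | hb
  · exact hb
  · exact absurd (le_of_mem_activeLetters_concat hb) hab.not_ge

lemma occAt_121_iff_eq_appendPeak {q : List ℕ} (hq : IsNC q) {i : ℕ} (hlen : q.length = i + 3) :
    occAt [1, 2, 1] q i ↔ q = appendPeak (q.take (i + 1)) := by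
  obtain ⟨x, y, z, hxyz⟩ := length_eq_three.mp (show (q.drop i).length = 3 by simp; omega)
  obtain ⟨P, rfl, rfl⟩ : ∃ P : List ℕ, P.length = i ∧ q = P ++ [x, y, z] :=
    ⟨q.take i, by simp; omega, by rw [← hxyz, take_append_drop]⟩
  rw [occAt, hxyz, take_of_length_le (by simp), ordIso_121_iff,
    show (P ++ [x, y, z]).take (P.length + 1) = P ++ [x] by simp [take_append],
    appendPeak_concat]
  simp only [append_assoc, cons_append, nil_append, append_cancel_left_eq, cons.injEq, and_true,
    true_and]
  have hnc : IsNC (P ++ [x] ++ [y]) := IsNC.of_append (w := [z]) (by simpa using hq)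
  constructor
  · rintro ⟨a, b, hab, rfl, rfl, rfl⟩
    exact ⟨eq_maxLetter_succ_of_isNC hnc hab, rfl⟩
  · rintro ⟨hy, hz⟩
    have := le_maxLetter (mem_append_right P (List.mem_singleton_self x))
    exact ⟨x, y, by omega, rfl, rfl, hz⟩

open scoped Classical in
lemma filter_occAt_121_extensions (i : ℕ) :
    (extensions [] (i + 3)).filter (occAt [1, 2, 1] · i) =
      (extensions [] (i + 1)).image appendPeak := by
  ext q
  simp only [Finset.mem_filter, Finset.mem_image, mem_extensions isNC_nil, nil_append]
  constructor
  · rintro ⟨⟨hlen, hq⟩, hocc⟩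
    refine ⟨q.take (i + 1), ⟨by simp; omega, IsNC.of_append (w := q.drop (i + 1)) ?_⟩,
      ((occAt_121_iff_eq_appendPeak hq hlen).mp hocc).symm⟩
    rwa [take_append_drop]
  · rintro ⟨l, ⟨hlen, hl⟩, rfl⟩
    have hne : l ≠ [] := ne_nil_of_length_pos (by omega)
    have hlen' : (appendPeak l).length = i + 3 := by simp [appendPeak, hlen]
    have hnc := isNC_appendPeak hl hne
    refine ⟨⟨hlen', hnc⟩, (occAt_121_iff_eq_appendPeak hnc hlen').mpr ?_⟩
    rw [show (appendPeak l).take (i + 1) = l by simp [appendPeak, ← hlen]]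

open scoped Classical in
lemma card_filter_occAt_121 {i n : ℕ} (hi : i + 3 ≤ n) :
    #((extensions [] n).filter (occAt [1, 2, 1] · i)) = numExtensions (n - 2) 0 := by
  obtain ⟨t, rfl⟩ := Nat.exists_eq_add_of_le hi
  rw [show i + 3 + t - 2 = i + 1 + t by omega, card_filter_extensions_add isNC_nil (i + 3) t _
      fun q w hq => occAt_append_of_le w (by simp [hq]),
    filter_occAt_121_extensions, sum_image appendPeak_injective.injOn]
  calc ∑ l ∈ extensions [] (i + 1), #(extensions ([] ++ appendPeak l) t)
      = ∑ l ∈ extensions [] (i + 1), #(extensions ([] ++ l) t) := by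
        refine sum_congr rfl fun l hl => ?_
        obtain ⟨hlen, hnc⟩ := (mem_extensions isNC_nil).mp hl
        simp only [nil_append] at hnc ⊢
        have hne : l ≠ [] := ne_nil_of_length_pos (by omega)
        rw [card_extensions (isNC_appendPeak hnc hne), card_extensions hnc,
          activeLetters_appendPeak hne]
    _ = numExtensions (i + 1 + t) 0 := by
        rw [← card_extensions_add isNC_nil, card_extensions isNC_nil]
        rfl

end NCWord

/-- For n ≥ 3, the total number of occurrences of the subword 121 over NC_n
equals binom(2n−4, n−1). -/
theorem stmt15 (n : ℕ) (hn : 3 ≤ n) :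
    totalOcc n [1, 2, 1] = Nat.choose (2 * n - 4) (n - 1) := by
  calc totalOcc n [1, 2, 1]
      = ∑ _i ∈ Finset.range (n - 2), NCWord.numExtensions (n - 2) 0 := by
        rw [NCWord.totalOcc_eq_sum (by simp)]
        exact Finset.sum_congr (by simp) fun i hi =>
          NCWord.card_filter_occAt_121 (by have := Finset.mem_range.mp hi; omega)
    _ = (n - 2) * NCWord.numExtensions (n - 2) 0 := by simp
    _ = Nat.choose (2 * n - 4) (n - 1) := by
        rw [NCWord.mul_numExtensions_zero]
        congr 1 <;> omega
end
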